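/- arXiv:2212.05553 — 4 statements merged into one kernel-verified Lean document; each statement's English description precedes it below -/
import Mathlib

section
/- Let T₀ be the tree obtained from the 1-3 tree T_{1,3} by replacing each edge e at level n (i.e. with |e| = n) by a path of length n. Then the intermediate growth rate of T₀ equals 1/2, i.e., Igr(T₀) = sup{λ > 0 : liminf_n Σ_{e∈(T₀)_n} exp(−n^λ) > 0} = 1/2. -/
open Filter ENNReal

namespace TreeNotions

variable {α : Type}

/-- Vertices (equivalently, edges indexed by their upper endpoint) at level `n`. -/
def level (T : Set (List α)) (n : ℕ) : Set (List α) := {v ∈ T | v.length = n}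

/-- The ball of radius `n` around the root. -/
def ball (T : Set (List α)) (n : ℕ) : Set (List α) := {v ∈ T | v.length ≤ n}

/-- An infinite simple path from the root. -/
def IsRay (T : Set (List α)) (r : ℕ → List α) : Prop :=
  r 0 = [] ∧ ∀ n, r n ∈ T ∧ ∃ a, r (n + 1) = r n ++ [a]

/-- A cutset separating the root from infinity: a set of edges (identified with their
upper endpoints) meeting every infinite simple path from the root. -/
def IsCutset (T : Set (List α)) (π : Set (List α)) : Prop :=
  (∀ v ∈ π, v ∈ T ∧ v ≠ []) ∧ ∀ r, IsRay T r → ∃ n, r n ∈ π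

/-- An infinite, locally finite, rooted (prefix-closed) tree of words. -/
def IsTree (T : Set (List α)) : Prop :=
  [] ∈ T ∧ (∀ v ∈ T, v.dropLast ∈ T) ∧ (∀ v ∈ T, {a : α | v ++ [a] ∈ T}.Finite) ∧ T.Infinite

/-- The branching number. -/
noncomputable def br (T : Set (List α)) : ℝ≥0∞ :=
  sSup {lam : ℝ≥0∞ | 0 < lam ∧
    0 < ⨅ (π) (_ : IsCutset T π), ∑' e : π, lam⁻¹ ^ (e : List α).length}

/-- The lower exponential growth rate. -/
noncomputable def gr (T : Set (List α)) : ℝ≥0∞ :=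
  Filter.liminf (fun n => (Nat.card (level T n) : ℝ≥0∞) ^ ((n : ℝ)⁻¹)) atTop

/-- The intermediate branching number (with `sSup ∅ = 0`). -/
noncomputable def Ibr (T : Set (List α)) : ℝ :=
  sSup {lam : ℝ | 0 < lam ∧
    0 < ⨅ (π) (_ : IsCutset T π),
      ∑' e : π, ENNReal.ofReal (Real.exp (-((e : List α).length : ℝ) ^ lam))}

/-- The intermediate growth rate (with `sSup ∅ = 0`). -/
noncomputable def Igr (T : Set (List α)) : ℝ :=
  sSup {lam : ℝ | 0 < lam ∧
    0 < Filter.liminf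
      (fun n => ∑' _e : level T n, ENNReal.ofReal (Real.exp (-(n : ℝ) ^ lam))) atTop}

/-- The branching-ruin number (with `sSup ∅ = 0`). -/
noncomputable def brr (T : Set (List α)) : ℝ :=
  sSup {lam : ℝ | 0 < lam ∧
    0 < ⨅ (π) (_ : IsCutset T π),
      ∑' e : π, ENNReal.ofReal (((e : List α).length : ℝ) ^ (-lam))}

/-- The polynomial growth rate (with `sSup ∅ = 0`). -/
noncomputable def grr (T : Set (List α)) : ℝ :=
  sSup {lam : ℝ | 0 < lam ∧
    0 < Filter.liminf
      (fun n => ∑' _e : level T n, ENNReal.ofReal ((n : ℝ) ^ (-lam))) atTop}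

/-- The descendant subtree of a vertex `w`. -/
def desc (T : Set (List α)) (w : List α) : Set (List α) := {v ∈ T | w <+: v}

/-- Adjacency in a tree of words. -/
def Adj (u v : List α) : Prop := (∃ a, v = u ++ [a]) ∨ ∃ a, u = v ++ [a]

/-- A tree of words is subperiodic if for some `N ≥ 0`, every vertex `x` admits an
adjacency-preserving injection from `T^x` to `T^{f(x)}` with `|f(x)| ≤ N`. -/
def IsSubperiodic (T : Set (List α)) : Prop :=
  ∃ N : ℕ, ∀ w ∈ T, ∃ f : List α → List α,
    f w ∈ T ∧ (f w).length ≤ N ∧ Set.InjOn f (desc T w) ∧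
    Set.MapsTo f (desc T w) (desc T (f w)) ∧
    ∀ u ∈ desc T w, ∀ v ∈ desc T w, Adj u v → Adj (f u) (f v)

/-- Number of children of the `i`-th vertex (from the left) at level `n` of the 1-3 tree. -/
def childCount (n i : ℕ) : ℕ := if n = 0 then 2 else if i < 2 ^ (n - 1) then 1 else 3

/-- The ordered list of (labelled) vertices at level `n` of the 1-3 tree. -/
def T13Level : ℕ → List (List ℕ)
  | 0 => [[]]
  | n + 1 => (T13Level n).zipIdx.flatMap fun p => (List.range (childCount n p.2)).map fun j => p.1 ++ [j]

/-- The 1-3 tree, as a set of labelled words. -/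
def T13 : Set (List ℕ) := {w | ∃ n, w ∈ T13Level n}

/-- Replace the letter at level `k + 1` by that letter followed by `k` zeros:
the edge at level `k + 1` is subdivided into a path of `k + 1` edges. -/
def expandFrom : ℕ → List ℕ → List ℕ
  | _, [] => []
  | k, a :: rest => (a :: List.replicate k 0) ++ expandFrom (k + 1) rest

/-- The subdivided 1-3 tree `T₀`: each level-`n` edge of the 1-3 tree becomes a path of
`n` edges. -/
def T0 : Set (List ℕ) := {u | ∃ w ∈ T13, u <+: expandFrom 0 w}

/-- The prefix of length `n` of a sequence. -/
def pref (x : ℕ → ℕ) (n : ℕ) : List ℕ := (List.range n).map x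

/-- The set of sequences coded by `T₀` (its rays). -/
def E0 : Set (ℕ → ℕ) := {x | ∀ n, pref x n ∈ T0}

/-- The left shift map. -/
def shift (x : ℕ → ℕ) : ℕ → ℕ := fun n => x (n + 1)

/-- The shift closure of `E₀`. -/
def Etilde : Set (ℕ → ℕ) := ⋃ j : ℕ, shift^[j] '' E0

/-- The prefix tree `Φ(E)` of a set of sequences. -/
def treeOf (E : Set (ℕ → ℕ)) : Set (List ℕ) := {w | ∃ x ∈ E, ∃ n, w = pref x n}

/-- The tree `T̃ = Φ(Ẽ)`. -/
def Ttilde : Set (List ℕ) := treeOf Etilde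

section Aux

open Filter ENNReal Topology

/-- `n*(n+1)/2` -/
def Lfun : ℕ → ℕ
  | 0 => 0
  | n + 1 => Lfun n + (n + 1)

lemma Lfun_mono : Monotone Lfun := monotone_nat_of_le_succ (fun n => by simp [Lfun])

lemma le_Lfun (n : ℕ) : n ≤ Lfun n := by
  induction n with
  | zero => simp [Lfun]
  | succ n ih => simp [Lfun]

lemma Lfun_le_sq (n : ℕ) : Lfun n ≤ n * n := by
  induction n with
  | zero => simp [Lfun]
  | succ n ih => simp [Lfun]; nlinarith

lemma length_expandFrom (w : List ℕ) : ∀ k, (expandFrom k w).length = w.length * k + Lfun w.length := by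
  induction w with
  | nil => simp [expandFrom, Lfun]
  | cons a r ih =>
      intro k
      simp only [expandFrom, List.length_append, List.length_cons, List.length_replicate,
        ih (k+1), Lfun]
      ring

lemma expandFrom_prefix {v w : List ℕ} (h : v <+: w) : ∀ k, expandFrom k v <+: expandFrom k w := by
  induction v generalizing w with
  | nil => intro k; simp [expandFrom]
  | cons a r ih =>
      obtain ⟨t, rfl⟩ := h
      intro k
      simp only [List.cons_append, expandFrom]
      obtain ⟨u, hu⟩ := ih (List.prefix_append r t) (k+1)
      exact ⟨u, by simp [expandFrom, ← hu]⟩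

lemma expandFrom_take_inj : ∀ (v w : List ℕ) (k m : ℕ), v.length = w.length →
    (∀ j, j < v.length → j * k + Lfun j < m) →
    (expandFrom k v).take m = (expandFrom k w).take m → v = w := by
  intro v
  induction v with
  | nil => intro w _ _ h _ _; exact (List.eq_nil_of_length_eq_zero h.symm).symm
  | cons a r ih =>
      rintro (_ | ⟨b, s⟩) k m hlen hm heq
      · simp at hlen
      · have hm0 : 0 < m := by have := hm 0 (by simp); simpa [Lfun] using this
        simp only [expandFrom, List.cons_append] at heq
        obtain ⟨m', rfl⟩ : ∃ m', m = m' + 1 := ⟨m - 1, by omega⟩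
        rw [List.take_succ_cons, List.take_succ_cons] at heq
        obtain ⟨hab, htail0⟩ := List.cons_eq_cons.mp heq
        have hlen' : r.length = s.length := by simpa using hlen
        rcases r with _ | ⟨c, r'⟩
        · exact hab ▸ (by simpa using hlen) ▸ rfl
        · -- r nonempty; m' ≥ k
          have hk : k + 1 ≤ m' + 1 := by
            have := hm 1 (by simp)
            simp [Lfun] at this; omega
          have htail := htail0
          rw [List.take_append, List.take_append] at htail
          have hrep : (List.replicate k (0:ℕ)).length = k := by simp
          have h2 : (expandFrom (k+1) (c :: r')).take (m' - k) = (expandFrom (k+1) s).take (m' - k) := by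
            have := List.append_inj htail (by simp [hrep])
            simpa [hrep] using this.2
          have := ih s (k+1) (m' - k) hlen' (by
            intro j hj
            have := hm (j+1) (by simpa using Nat.succ_lt_succ hj)
            rw [show Lfun (j+1) = Lfun j + (j+1) from rfl] at this
            have h3 : j * (k+1) = j * k + j := by ring
            have h4 : (j+1) * k = j * k + k := by ring
            omega) h2
          rw [hab, this]

lemma exists_parent {w : List ℕ} {n : ℕ} (h : w ∈ T13Level (n+1)) :
    ∃ v ∈ T13Level n, ∃ j, w = v ++ [j] := by
  rw [T13Level, List.mem_flatMap] at h
  obtain ⟨p, hp, hw⟩ := h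
  simp only [List.mem_map, List.mem_range] at hw
  obtain ⟨j, _, rfl⟩ := hw
  refine ⟨p.1, ?_, j, rfl⟩
  have := List.mem_map_of_mem (f := Prod.fst) hp
  rwa [List.zipIdx_map_fst] at this

lemma length_of_mem_T13Level : ∀ {n : ℕ} {w : List ℕ}, w ∈ T13Level n → w.length = n := by
  intro n
  induction n with
  | zero => intro w h; simp [T13Level] at h; simp [h]
  | succ n ih =>
      intro w h
      obtain ⟨v, hv, j, rfl⟩ := exists_parent h
      simp [ih hv]

lemma child_mem_T13Level {v : List ℕ} {n : ℕ} (h : v ∈ T13Level n) :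
    v ++ [0] ∈ T13Level (n+1) := by
  obtain ⟨i, hget⟩ := List.mem_iff_get.mp h
  rw [T13Level, List.mem_flatMap]
  refine ⟨(v, i.1), ?_, ?_⟩
  · rw [List.mem_zipIdx_iff_getElem?]
    simp [List.getElem?_eq_getElem i.2, ← hget]
  · simp only [List.mem_map, List.mem_range]
    exact ⟨0, by unfold childCount; split <;> [omega; (split <;> omega)], rfl⟩

lemma take_mem_T13Level : ∀ {n : ℕ} {w : List ℕ}, w ∈ T13Level n → ∀ j ≤ n, w.take j ∈ T13Level j := by
  intro n
  induction n with
  | zero =>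
      intro w h j hj
      interval_cases j
      have hw : w = [] := by simpa [T13Level] using h
      simpa [hw] using h
  | succ n ih =>
      intro w h j hj
      rcases Nat.eq_or_lt_of_le hj with rfl | hj
      · rwa [List.take_of_length_le (length_of_mem_T13Level h).le]
      · obtain ⟨v, hv, a, rfl⟩ := exists_parent h
        have hvlen : v.length = n := length_of_mem_T13Level hv
        rw [List.take_append_of_le_length (by omega)]
        exact ih hv j (by omega)

lemma length_T13Level (n : ℕ) : (T13Level n).length = 2 ^ n := by
  induction n with
  | zero => rfl
  | succ n ih =>
      rw [T13Level, List.length_flatMap]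
      have h1 : (List.map (List.length ∘ fun p : List ℕ × ℕ =>
          (List.range (childCount n p.2)).map fun j => p.1 ++ [j]) (T13Level n).zipIdx)
          = List.map (childCount n) (List.range (2 ^ n)) := by
        rw [← ih, List.range_eq_range', ← List.zipIdx_map_snd 0 (T13Level n), List.map_map]
        congr 1
        funext p
        simp [Function.comp]
      rw [show (List.map (fun a : List ℕ × ℕ => ((List.range (childCount n a.2)).map fun j => a.1 ++ [j]).length) (T13Level n).zipIdx) = _ from h1]
      have h2 : ∀ N g, (List.map g (List.range N)).sum = ∑ i ∈ Finset.range N, (g i : ℕ) := by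
        intro N g
        induction N with
        | zero => simp
        | succ N ihN => rw [List.range_succ, Finset.sum_range_succ, List.map_append, List.sum_append, ihN]; simp
      rw [h2]
      rcases n with _ | t
      · decide
      · have hsplit : 2 ^ (t+1) = 2 ^ t + 2 ^ t := by ring
        rw [hsplit, Finset.sum_range_add]
        have e1 : ∀ i ∈ Finset.range (2^t), childCount (t+1) i = 1 := by
          intro i hi
          simp only [Finset.mem_range] at hi
          simp [childCount, hi]
        have e2 : ∀ i ∈ Finset.range (2^t), childCount (t+1) (2^t + i) = 3 := by
          intro i hi
          simp [childCount]
        rw [Finset.sum_congr rfl e1, Finset.sum_congr rfl e2]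
        simp
        ring

lemma nodup_T13Level (n : ℕ) : (T13Level n).Nodup := by
  induction n with
  | zero => simp [T13Level]
  | succ n ih =>
      rw [T13Level, List.nodup_flatMap]
      constructor
      · intro p _
        exact List.nodup_range.map (fun x y h => by simpa using h)
      · have hsnd : ((T13Level n).zipIdx.map Prod.fst).Nodup := by rwa [List.zipIdx_map_fst]
        have hpair := (List.pairwise_map.mp hsnd)
        refine hpair.imp ?_
        intro p q hpq
        simp only [Function.onFun]
        rw [List.disjoint_left]
        rintro x hx hx'
        simp only [List.mem_map, List.mem_range] at hx hx'
        obtain ⟨j, _, rfl⟩ := hx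
        obtain ⟨j', _, h⟩ := hx'
        exact hpq (by simpa using congrArg List.dropLast h.symm)

noncomputable def nfun (m : ℕ) : ℕ := Nat.find (⟨m, le_Lfun m⟩ : ∃ n, m ≤ Lfun n)

lemma Lfun_nfun (m : ℕ) : m ≤ Lfun (nfun m) := by
  unfold nfun; exact Nat.find_spec (⟨m, le_Lfun m⟩ : ∃ n, m ≤ Lfun n)

lemma nfun_min {m j : ℕ} (h : j < nfun m) : Lfun j < m := by
  unfold nfun at h
  exact lt_of_not_ge (Nat.find_min (⟨m, le_Lfun m⟩ : ∃ n, m ≤ Lfun n) h)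

lemma nfun_le {m N : ℕ} (h : m ≤ Lfun N) : nfun m ≤ N := by
  unfold nfun; exact Nat.find_min' (⟨m, le_Lfun m⟩ : ∃ n, m ≤ Lfun n) h

lemma level_T0_eq (m : ℕ) :
    level T0 m = (fun w => (expandFrom 0 w).take m) '' {w | w ∈ T13Level (nfun m)} := by
  ext u
  constructor
  · rintro ⟨⟨w, ⟨N, hwN⟩, hpre⟩, hlen⟩
    have hNlen : w.length = N := length_of_mem_T13Level hwN
    have hm : m ≤ Lfun N := by
      have := hpre.length_le
      rw [length_expandFrom, hNlen] at this
      omega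
    have hn : nfun m ≤ N := nfun_le hm
    refine ⟨w.take (nfun m), take_mem_T13Level hwN _ hn, ?_⟩
    have hp : expandFrom 0 (w.take (nfun m)) <+: expandFrom 0 w :=
      expandFrom_prefix (List.take_prefix _ _) 0
    have hlen' : (expandFrom 0 (w.take (nfun m))).length = Lfun (nfun m) := by
      rw [length_expandFrom, List.length_take]
      simp [hNlen, hn, Nat.min_eq_left]
    have h1 : (expandFrom 0 (w.take (nfun m))).take m = (expandFrom 0 w).take m := by
      rw [List.prefix_iff_eq_take.mp hp, List.take_take, hlen', Nat.min_eq_left (Lfun_nfun m)]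
    dsimp only
    rw [h1, ← hlen, ← List.prefix_iff_eq_take.mp hpre]
  · rintro ⟨w, hw, rfl⟩
    have hlen : w.length = nfun m := length_of_mem_T13Level hw
    refine ⟨⟨w, ⟨nfun m, hw⟩, List.take_prefix _ _⟩, ?_⟩
    rw [List.length_take, length_expandFrom, hlen]
    have := Lfun_nfun m
    omega

lemma injOn_level_T0 (m : ℕ) :
    Set.InjOn (fun w => (expandFrom 0 w).take m) {w | w ∈ T13Level (nfun m)} := by
  intro v hv w hw heq
  rcases Nat.eq_zero_or_pos (nfun m) with h0 | hpos
  · have h1 : v.length = 0 := by rw [length_of_mem_T13Level hv, h0]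
    have h2 : w.length = 0 := by rw [length_of_mem_T13Level hw, h0]
    rw [List.length_eq_zero_iff.mp h1, List.length_eq_zero_iff.mp h2]
  · refine expandFrom_take_inj v w 0 m ?_ ?_ heq
    · rw [length_of_mem_T13Level hv, length_of_mem_T13Level hw]
    · intro j hj
      rw [length_of_mem_T13Level hv] at hj
      simpa using nfun_min hj

lemma encard_level_T0 (m : ℕ) : (level T0 m).encard = ((2 ^ (nfun m) : ℕ) : ℕ∞) := by
  rw [level_T0_eq, Set.InjOn.encard_image (injOn_level_T0 m)]
  have : {w | w ∈ T13Level (nfun m)} = ((T13Level (nfun m)).toFinset : Set (List ℕ)) := by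
    simp
  rw [this, Set.encard_coe_eq_coe_finsetCard,
    List.toFinset_card_of_nodup (nodup_T13Level _), length_T13Level]

open Filter ENNReal Topology

lemma sq_le_two_Lfun (n : ℕ) : n * n ≤ 2 * Lfun n := by
  induction n with
  | zero => simp
  | succ n ih => simp [Lfun]; nlinarith

lemma nfun_pos {m : ℕ} (hm : 1 ≤ m) : 1 ≤ nfun m := by
  by_contra h
  have h0 : nfun m = 0 := by omega
  have := Lfun_nfun m
  rw [h0] at this
  simp [Lfun] at this
  omega

lemma nfun_upper {m : ℕ} (hm : 1 ≤ m) : (nfun m - 1) * (nfun m - 1) < 2 * m := by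
  have h1 := nfun_pos hm
  have h2 : Lfun (nfun m - 1) < m := nfun_min (by omega)
  have h3 := sq_le_two_Lfun (nfun m - 1)
  omega

lemma f_eq (lam : ℝ) (m : ℕ) :
    (∑' _e : level T0 m, ENNReal.ofReal (Real.exp (-(m : ℝ) ^ lam)))
      = (2 : ℝ≥0∞) ^ (nfun m) * ENNReal.ofReal (Real.exp (-(m : ℝ) ^ lam)) := by
  rw [ENNReal.tsum_set_const, encard_level_T0]
  push_cast
  rfl

-- real bounds on nfun
lemma nfun_real_lower {m : ℕ} (hm : 1 ≤ m) : (m : ℝ) ^ ((1:ℝ)/2) ≤ (nfun m : ℕ) := by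
  set x : ℝ := (m : ℝ) ^ ((1:ℝ)/2) with hx
  have hm0 : (0:ℝ) < m := by exact_mod_cast hm
  have hxx : x * x = m := by
    rw [hx, ← Real.rpow_add hm0]
    norm_num
  have hx0 : 0 ≤ x := Real.rpow_nonneg hm0.le _
  have h1 : (m : ℝ) ≤ (nfun m : ℕ) * (nfun m : ℕ) := by
    exact_mod_cast le_trans (Lfun_nfun m) (Lfun_le_sq _)
  nlinarith [Nat.cast_nonneg (α := ℝ) (nfun m)]

lemma nfun_real_upper {m : ℕ} (hm : 1 ≤ m) : (nfun m : ℝ) ≤ 3 * (m : ℝ) ^ ((1:ℝ)/2) := by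
  set x : ℝ := (m : ℝ) ^ ((1:ℝ)/2) with hx
  have hm0 : (0:ℝ) < m := by exact_mod_cast hm
  have hxx : x * x = m := by
    rw [hx, ← Real.rpow_add hm0]
    norm_num
  have hx1 : 1 ≤ x := Real.one_le_rpow (by exact_mod_cast hm) (by norm_num)
  have h1 := nfun_pos hm
  have h2 : ((nfun m : ℝ) - 1) * ((nfun m : ℝ) - 1) < 2 * m := by
    have := nfun_upper hm
    have hcast : ((nfun m - 1 : ℕ) : ℝ) = (nfun m : ℝ) - 1 := by
      push_cast [Nat.cast_sub h1]
      ring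
    calc ((nfun m : ℝ) - 1) * ((nfun m : ℝ) - 1) = ((nfun m - 1 : ℕ) : ℝ) * ((nfun m - 1 : ℕ) : ℝ) := by rw [hcast]
    _ < 2 * m := by exact_mod_cast this
  nlinarith [(Nat.one_le_cast (α := ℝ)).mpr h1]

lemma lower_mem {lam : ℝ} (hl0 : 0 < lam) (hl2 : lam < 1/2) :
    0 < Filter.liminf
      (fun n => ∑' _e : level T0 n, ENNReal.ofReal (Real.exp (-(n : ℝ) ^ lam))) atTop := by
  have key : ∀ᶠ m : ℕ in atTop,
      (1:ℝ≥0∞) ≤ ∑' _e : level T0 m, ENNReal.ofReal (Real.exp (-(m : ℝ) ^ lam)) := by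
    have ht : Tendsto (fun x : ℝ => x ^ (-(1/2 - lam))) atTop (𝓝 0) :=
      tendsto_rpow_neg_atTop (by linarith)
    have ht2 : Tendsto (fun m : ℕ => ((m:ℝ)) ^ (-(1/2 - lam))) atTop (𝓝 0) :=
      ht.comp tendsto_natCast_atTop_atTop
    have hev : ∀ᶠ m : ℕ in atTop, ((m:ℝ)) ^ (-(1/2-lam)) < Real.log 2 :=
      ht2.eventually_lt_const (Real.log_pos (by norm_num))
    filter_upwards [hev, eventually_ge_atTop 1] with m hm1 hm2
    rw [f_eq]
    set n := nfun m with hn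
    have hm0 : (0:ℝ) < m := by exact_mod_cast hm2
    have step1 : (m:ℝ) ^ lam ≤ n * Real.log 2 := by
      have e1 : (m:ℝ) ^ lam = (m:ℝ) ^ ((1:ℝ)/2) * (m:ℝ) ^ (-(1/2 - lam)) := by
        rw [← Real.rpow_add hm0]; ring_nf
      rw [e1]
      have h12 : (0:ℝ) ≤ (m:ℝ) ^ ((1:ℝ)/2) := Real.rpow_nonneg hm0.le _
      calc (m:ℝ) ^ ((1:ℝ)/2) * (m:ℝ) ^ (-(1/2 - lam))
          ≤ (m:ℝ) ^ ((1:ℝ)/2) * Real.log 2 := by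
            exact mul_le_mul_of_nonneg_left hm1.le h12
        _ ≤ n * Real.log 2 := by
            exact mul_le_mul_of_nonneg_right (nfun_real_lower hm2) (Real.log_nonneg (by norm_num))
    have step3 : (2 : ℝ≥0∞) ^ n * ENNReal.ofReal (Real.exp (-((n:ℝ) * Real.log 2))) = 1 := by
      have e2 : Real.exp (-((n:ℝ) * Real.log 2)) = ((2:ℝ) ^ n)⁻¹ := by
        rw [Real.exp_neg, Real.exp_nat_mul, Real.exp_log (by norm_num)]
      rw [e2]
      have e3 : (2 : ℝ≥0∞) ^ n = ENNReal.ofReal ((2:ℝ) ^ n) := by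
        rw [ENNReal.ofReal_pow (by norm_num)]
        norm_num
      rw [e3, ← ENNReal.ofReal_mul (by positivity)]
      rw [mul_inv_cancel₀ (by positivity)]
      simp
    calc (1:ℝ≥0∞) = (2 : ℝ≥0∞) ^ n * ENNReal.ofReal (Real.exp (-((n:ℝ) * Real.log 2))) := step3.symm
      _ ≤ (2 : ℝ≥0∞) ^ n * ENNReal.ofReal (Real.exp (-(m:ℝ) ^ lam)) := by
          refine mul_le_mul_right (ENNReal.ofReal_le_ofReal (Real.exp_le_exp.mpr ?_)) _
          linarith
  calc (0:ℝ≥0∞) < 1 := one_pos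
    _ ≤ _ := le_liminf_of_le (by isBoundedDefault) key

lemma upper_tendsto {lam : ℝ} (hl2 : 1/2 < lam) :
    Tendsto (fun m : ℕ => ∑' _e : level T0 m, ENNReal.ofReal (Real.exp (-(m : ℝ) ^ lam)))
      atTop (𝓝 0) := by
  have hsqrt : Tendsto (fun m : ℕ => ((m:ℝ)) ^ ((1:ℝ)/2)) atTop atTop :=
    (tendsto_rpow_atTop (by norm_num)).comp tendsto_natCast_atTop_atTop
  have hb : Tendsto (fun m : ℕ => ENNReal.ofReal (Real.exp (-((m:ℝ) ^ ((1:ℝ)/2))))) atTop (𝓝 0) := by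
    have h1 : Tendsto (fun m : ℕ => Real.exp (-((m:ℝ) ^ ((1:ℝ)/2)))) atTop (𝓝 0) :=
      Real.tendsto_exp_atBot.comp (tendsto_neg_atTop_atBot.comp hsqrt)
    have := ENNReal.tendsto_ofReal h1
    simpa using this
  have hev4 : ∀ᶠ m : ℕ in atTop, (4:ℝ) ≤ ((m:ℝ)) ^ (lam - 1/2) :=
    ((tendsto_rpow_atTop (by linarith)).comp tendsto_natCast_atTop_atTop).eventually_ge_atTop 4
  refine tendsto_of_tendsto_of_tendsto_of_le_of_le' tendsto_const_nhds hb
    (Eventually.of_forall fun m => zero_le) ?_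
  filter_upwards [hev4, eventually_ge_atTop 1] with m hm4 hm1
  rw [f_eq]
  set n := nfun m with hn
  have hm0 : (0:ℝ) < m := by exact_mod_cast hm1
  have hx0 : (0:ℝ) ≤ (m:ℝ) ^ ((1:ℝ)/2) := Real.rpow_nonneg hm0.le _
  have hkey : (n:ℝ) * Real.log 2 + (m:ℝ) ^ ((1:ℝ)/2) ≤ (m:ℝ) ^ lam := by
    have e1 : (m:ℝ) ^ lam = (m:ℝ) ^ ((1:ℝ)/2) * (m:ℝ) ^ (lam - 1/2) := by
      rw [← Real.rpow_add hm0]; ring_nf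
    have hlog : Real.log 2 ≤ 1 := by
      have := Real.log_le_sub_one_of_pos (by norm_num : (0:ℝ) < 2)
      linarith
    have hup : (n:ℝ) ≤ 3 * (m:ℝ) ^ ((1:ℝ)/2) := nfun_real_upper hm1
    have hlog0 : (0:ℝ) ≤ Real.log 2 := Real.log_nonneg (by norm_num)
    calc (n:ℝ) * Real.log 2 + (m:ℝ) ^ ((1:ℝ)/2)
        ≤ (3 * (m:ℝ) ^ ((1:ℝ)/2)) * 1 + (m:ℝ) ^ ((1:ℝ)/2) := by
          refine add_le_add_left ?_ _
          exact mul_le_mul hup hlog hlog0 (by positivity)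
      _ = 4 * (m:ℝ) ^ ((1:ℝ)/2) := by ring
      _ ≤ (m:ℝ) ^ lam := by
          rw [e1]
          nlinarith [mul_le_mul_of_nonneg_right hm4 hx0]
  have e3 : (2 : ℝ≥0∞) ^ n = ENNReal.ofReal ((2:ℝ) ^ n) := by
    rw [ENNReal.ofReal_pow (by norm_num)]
    norm_num
  rw [e3, ← ENNReal.ofReal_mul (by positivity)]
  refine ENNReal.ofReal_le_ofReal ?_
  have e4 : (2:ℝ) ^ n * Real.exp (-(m:ℝ) ^ lam) = Real.exp ((n:ℝ) * Real.log 2 - (m:ℝ) ^ lam) := by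
    rw [Real.exp_sub, Real.exp_nat_mul, Real.exp_log (by norm_num), Real.exp_neg]
    ring
  rw [e4]
  exact Real.exp_le_exp.mpr (by linarith)

end Aux

end TreeNotions

open TreeNotions in
/-- The intermediate growth rate of the subdivided 1-3 tree `T₀` equals `1/2`. -/
theorem Igr_T0 : Igr T0 = 1 / 2 := by
  have hub : ∀ lam ∈ {lam : ℝ | 0 < lam ∧ 0 < Filter.liminf
      (fun n => ∑' _e : level T0 n, ENNReal.ofReal (Real.exp (-(n : ℝ) ^ lam))) atTop},
      lam ≤ 1/2 := by
    rintro lam ⟨h0, hpos⟩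
    by_contra h
    rw [(upper_tendsto (lt_of_not_ge h)).liminf_eq] at hpos
    exact lt_irrefl 0 hpos
  have hsub : Set.Ioo (0:ℝ) (1/2) ⊆ {lam : ℝ | 0 < lam ∧ 0 < Filter.liminf
      (fun n => ∑' _e : level T0 n, ENNReal.ofReal (Real.exp (-(n : ℝ) ^ lam))) atTop} :=
    fun lam hl => ⟨hl.1, lower_mem hl.1 hl.2⟩
  rw [Igr]
  refine le_antisymm (Real.sSup_le hub (by norm_num)) ?_
  have h2 := csSup_le_csSup ⟨1/2, hub⟩
    (⟨1/4, by norm_num⟩ : (Set.Ioo (0:ℝ) (1/2)).Nonempty) hsub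
  rwa [csSup_Ioo (by norm_num)] at h2
end

section
/- Let T₀ be the tree obtained from the 1-3 tree by replacing each level-n edge by a path of length n. Then the intermediate branching number of T₀ is 0: for every λ > 0 and every ε > 0 there exists a cutset π of T₀ separating the root from infinity with Σ_{e∈π} exp(−|e|^λ) ≤ ε. -/
open Filter ENNReal

namespace IbrAux
open TreeNotions

/-! ### Arithmetic of block starts -/

def cstart (n i : ℕ) : ℕ := ∑ k ∈ Finset.range i, childCount n k

lemma cstart_def (n i : ℕ) : cstart n i = ∑ k ∈ Finset.range i, childCount n k := rfl

lemma childCount_pos (n i : ℕ) : 0 < childCount n i := by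
  unfold childCount; split
  · norm_num
  · split <;> norm_num

lemma childCount_le (n i : ℕ) : childCount n i ≤ 3 := by
  unfold childCount; split
  · norm_num
  · split <;> norm_num

lemma cstart_succ (n i : ℕ) : cstart n (i+1) = cstart n i + childCount n i :=
  Finset.sum_range_succ _ _

lemma cstart_mono (n : ℕ) : Monotone (cstart n) := by
  intro a b hab
  exact Finset.sum_le_sum_of_subset (Finset.range_subset_range.2 hab)

lemma cstart_zero' (i : ℕ) : cstart 0 i = 2 * i := by
  induction i with
  | zero => simp [cstart]
  | succ k ih => rw [cstart_succ, ih]; simp [childCount]; ring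

lemma cstart_left {n : ℕ} (hn : n ≠ 0) {i : ℕ} (hi : i ≤ 2 ^ (n-1)) : cstart n i = i := by
  induction i with
  | zero => simp [cstart]
  | succ k ih =>
    rw [cstart_succ, ih (le_of_lt hi)]
    have hk : k < 2 ^ (n-1) := hi
    simp [childCount, hn, hk]

lemma cstart_right {n : ℕ} (hn : n ≠ 0) {i : ℕ} (hi : 2 ^ (n-1) ≤ i) :
    cstart n i + 2 ^ n = 3 * i := by
  induction i, hi using Nat.le_induction with
  | base =>
    rw [cstart_left hn le_rfl]
    have : 2 ^ n = 2 * 2 ^ (n-1) := by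
      conv_lhs => rw [show n = (n-1)+1 by omega]
      ring
    omega
  | succ k hk ih =>
    rw [cstart_succ]
    have : childCount n k = 3 := by simp [childCount, hn, Nat.not_lt.2 hk]
    omega

lemma cstart_pow (n : ℕ) : cstart n (2 ^ n) = 2 ^ (n+1) := by
  rcases Nat.eq_zero_or_pos n with h | h
  · subst h; simp [cstart_zero']
  · have hn : n ≠ 0 := h.ne'
    have h1 : 2 ^ (n-1) ≤ 2 ^ n := Nat.pow_le_pow_right (by norm_num) (by omega)
    have := cstart_right hn h1
    have h2 : (2:ℕ) ^ (n+1) = 2 * 2 ^ n := by ring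
    omega

lemma decomp {n : ℕ} {i' : ℕ} (h : i' < 2 ^ (n+1)) :
    ∃ i, i < 2 ^ n ∧ ∃ j, j < childCount n i ∧ i' = cstart n i + j := by
  rcases Nat.eq_zero_or_pos n with hn | hn
  · subst hn
    exact ⟨0, by norm_num, i', by simpa [childCount] using h, by simp [cstart]⟩
  have hn' : n ≠ 0 := hn.ne'
  have hpow : 2 * 2 ^ (n-1) = 2 ^ n := by
    conv_rhs => rw [show n = (n-1)+1 by omega]; rw [pow_succ]
    ring
  by_cases hc : i' < 2 ^ (n-1)
  · refine ⟨i', by omega, 0, childCount_pos _ _, ?_⟩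
    rw [cstart_left hn' (le_of_lt hc)]; omega
  · push_neg at hc
    set i := (i' + 2 ^ n) / 3 with hidef
    have h3 : 3 * i ≤ i' + 2 ^ n := Nat.mul_div_le (i' + 2 ^ n) 3
    have h4 : i' + 2 ^ n < 3 * i + 3 := by
      omega
    have hile : 2 ^ (n-1) ≤ i := by omega
    have hilt : i < 2 ^ n := by
      have : i' + 2 ^ n < 3 * 2 ^ n := by
        have h2 : (2:ℕ) ^ (n+1) = 2 * 2 ^ n := by ring
        omega
      omega
    have hcs := cstart_right hn' hile
    have hcc : childCount n i = 3 := by simp [childCount, hn', Nat.not_lt.2 hile]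
    refine ⟨i, hilt, i' + 2 ^ n - 3 * i, by omega, by omega⟩

lemma decomp_unique {n i i' j j' : ℕ} (hj : j < childCount n i) (hj' : j' < childCount n i')
    (h : cstart n i + j = cstart n i' + j') : i = i' ∧ j = j' := by
  rcases lt_trichotomy i i' with hlt | heq | hgt
  · have h1 : cstart n i + j < cstart n (i+1) := by rw [cstart_succ]; omega
    have h2 : cstart n (i+1) ≤ cstart n i' := cstart_mono n hlt
    omega
  · subst heq; omega
  · have h1 : cstart n i' + j' < cstart n (i'+1) := by rw [cstart_succ]; omega
    have h2 : cstart n (i'+1) ≤ cstart n i := cstart_mono n hgt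
    omega

/-! ### flatMap positional lemmas -/

lemma flatMap_getD (F : ℕ → List ℕ → List (List ℕ)) :
    ∀ (l : List (List ℕ)) (s i j : ℕ), i < l.length →
      j < (F (s+i) (l.getD i [])).length →
      ((l.zipIdx s).flatMap (fun p => F p.2 p.1)).getD
        ((∑ k ∈ Finset.range i, (F (s+k) (l.getD k [])).length) + j) []
        = (F (s+i) (l.getD i [])).getD j [] := by
  intro l
  induction l with
  | nil => intro s i j hi; simp at hi
  | cons hd tl ih =>
    intro s i j hi hj
    rw [List.zipIdx_cons, List.flatMap_cons]
    cases i with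
    | zero =>
      simp only [Finset.range_zero, Finset.sum_empty, Nat.zero_add]
      simp only [List.getD_cons_zero] at hj ⊢
      rw [List.getD_append _ _ _ _ (by simpa using hj)]
      simp
    | succ i =>
      have hsum : (∑ k ∈ Finset.range (i+1), (F (s+k) ((hd::tl).getD k [])).length)
          = (F s hd).length + ∑ k ∈ Finset.range i, (F (s+1+k) (tl.getD k [])).length := by
        rw [Finset.sum_range_succ']
        simp only [List.getD_cons_succ, List.getD_cons_zero, Nat.add_zero]
        rw [add_comm]
        congr 1
        apply Finset.sum_congr rfl
        intro k _
        congr 2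
        omega
      rw [hsum, add_assoc, List.getD_append_right _ _ _ _ (by simp)]
      have := ih (s+1) i j (by simpa using hi) (by
        simp only [List.getD_cons_succ] at hj
        convert hj using 3
        omega)
      simp only [Nat.add_sub_cancel_left]
      simp only [List.getD_cons_succ]
      rw [show s+(i+1) = s+1+i from by omega]
      exact this

lemma flatMap_length (F : ℕ → List ℕ → List (List ℕ)) :
    ∀ (l : List (List ℕ)) (s : ℕ),
      ((l.zipIdx s).flatMap (fun p => F p.2 p.1)).length
        = ∑ k ∈ Finset.range l.length, (F (s+k) (l.getD k [])).length := by
  intro l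
  induction l with
  | nil => simp
  | cons hd tl ih =>
    intro s
    rw [List.zipIdx_cons, List.flatMap_cons, List.length_append, ih (s+1),
      List.length_cons, Finset.sum_range_succ']
    simp only [List.getD_cons_succ, List.getD_cons_zero, Nat.add_zero]
    rw [add_comm]
    congr 1
    apply Finset.sum_congr rfl
    intro k _
    congr 2
    omega

/-! ### The vertices of the 1-3 tree by position -/

def V (n i : ℕ) : List ℕ := (T13Level n).getD i []

lemma T13Level_succ_eq (n : ℕ) :
    T13Level (n+1) = ((T13Level n).zipIdx 0).flatMap
      (fun p => (fun (i : ℕ) (w : List ℕ) => (List.range (childCount n i)).map fun j => w ++ [j]) p.2 p.1) := rfl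

lemma T13Level_length (n : ℕ) : (T13Level n).length = 2 ^ n := by
  induction n with
  | zero => rfl
  | succ n ih =>
    rw [T13Level_succ_eq,
      flatMap_length (fun (i : ℕ) (w : List ℕ) => (List.range (childCount n i)).map fun j => w ++ [j]) (T13Level n) 0, ih]
    have : ∀ k ∈ Finset.range (2^n),
        ((fun (i : ℕ) (w : List ℕ) => (List.range (childCount n i)).map fun j => w ++ [j]) (0+k) ((T13Level n).getD k [])).length = childCount n k := by
      intro k _; simp
    rw [Finset.sum_congr rfl this, ← cstart_def, cstart_pow]

lemma V_child {n i j : ℕ} (hi : i < 2 ^ n) (hj : j < childCount n i) :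
    V (n+1) (cstart n i + j) = V n i ++ [j] := by
  have hlen : i < (T13Level n).length := by rw [T13Level_length]; exact hi
  have h := flatMap_getD (fun (i : ℕ) (w : List ℕ) => (List.range (childCount n i)).map fun j => w ++ [j])
    (T13Level n) 0 i j hlen (by simpa using hj)
  rw [V, T13Level_succ_eq]
  have hsum : (∑ k ∈ Finset.range i,
      ((fun (i : ℕ) (w : List ℕ) => (List.range (childCount n i)).map fun j => w ++ [j]) (0+k) ((T13Level n).getD k [])).length) = cstart n i := by
    rw [cstart_def]
    apply Finset.sum_congr rfl
    intro k _; simp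
  rw [hsum] at h
  rw [h]
  simp only [Nat.zero_add]
  rw [List.getD_eq_getElem?_getD]
  simp [hj, V]

lemma V_length : ∀ n, ∀ i < 2 ^ n, (V n i).length = n := by
  intro n
  induction n with
  | zero => intro i hi; interval_cases i <;> rfl
  | succ n ih =>
    intro i' hi'
    obtain ⟨i, hi, j, hj, rfl⟩ := decomp hi'
    rw [V_child hi hj]
    simp [ih i hi]

lemma V_inj : ∀ n, ∀ i < 2 ^ n, ∀ i₂, i₂ < 2 ^ n → V n i = V n i₂ → i = i₂ := by
  intro n
  induction n with
  | zero => intro i hi i₂ hi₂ _; omega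
  | succ n ih =>
    intro a ha b hb hab
    obtain ⟨i, hi, j, hj, rfl⟩ := decomp ha
    obtain ⟨i₂, hi₂, j₂, hj₂, rfl⟩ := decomp hb
    rw [V_child hi hj, V_child hi₂ hj₂] at hab
    have h1 : V n i = V n i₂ ∧ j = j₂ := by
      constructor
      · exact List.append_inj_left' hab rfl
      · have := List.append_inj_right' hab rfl
        simpa using this
    obtain ⟨h2, rfl⟩ := h1
    rw [ih i hi i₂ hi₂ h2]

lemma mem_T13Level_iff {n : ℕ} {w : List ℕ} :
    w ∈ T13Level n ↔ ∃ i, i < 2 ^ n ∧ w = V n i := by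
  constructor
  · intro hw
    obtain ⟨i, hi, hget⟩ := List.mem_iff_getElem.1 hw
    refine ⟨i, by rwa [T13Level_length] at hi, ?_⟩
    rw [V, List.getD_eq_getElem?_getD, List.getElem?_eq_getElem hi, hget]
    rfl
  · rintro ⟨i, hi, rfl⟩
    have hlen : i < (T13Level n).length := by rw [T13Level_length]; exact hi
    rw [V, List.getD_eq_getElem?_getD]
    simp only [List.getElem?_eq_getElem hlen]
    exact List.getElem_mem hlen

lemma V_take : ∀ n, ∀ i, i < 2 ^ n → ∀ m, m ≤ n → ∃ i₂, i₂ < 2 ^ m ∧ (V n i).take m = V m i₂ := by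
  intro n
  induction n with
  | zero =>
    intro i hi m hm
    interval_cases m
    interval_cases i
    exact ⟨0, by norm_num, rfl⟩
  | succ n ih =>
    intro i' hi' m hm
    rcases Nat.eq_or_lt_of_le hm with heq | hlt
    · subst heq
      exact ⟨i', hi', by rw [List.take_of_length_le (le_of_eq (V_length _ i' hi'))]⟩
    · have hm' : m ≤ n := by omega
      obtain ⟨i, hi, j, hj, rfl⟩ := decomp hi'
      obtain ⟨i₂, hi₂, htake⟩ := ih i hi m hm'
      refine ⟨i₂, hi₂, ?_⟩
      rw [V_child hi hj, List.take_append_of_le_length (by rw [V_length n i hi]; exact hm'), htake]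

/-! ### expandFrom lemmas -/

def glen : ℕ → ℕ → ℕ
  | _, 0 => 0
  | k, n+1 => (k+1) + glen (k+1) n

lemma length_expandFrom : ∀ (w : List ℕ) (k : ℕ), (expandFrom k w).length = glen k w.length := by
  intro w
  induction w with
  | nil => intro k; rfl
  | cons a rest ih =>
    intro k
    show ((a :: List.replicate k 0) ++ expandFrom (k+1) rest).length = (k+1) + glen (k+1) rest.length
    rw [List.length_append, ih (k+1)]
    simp

lemma expandFrom_append : ∀ (u : List ℕ) (k : ℕ) (v : List ℕ),
    expandFrom k (u ++ v) = expandFrom k u ++ expandFrom (k + u.length) v := by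
  intro u
  induction u with
  | nil => intro k v; simp [expandFrom]
  | cons a rest ih =>
    intro k v
    show (a :: List.replicate k 0) ++ expandFrom (k+1) (rest ++ v) = _
    rw [ih (k+1) v]
    simp [expandFrom]
    congr 1
    omega

lemma expandFrom_inj : ∀ (u : List ℕ) (k : ℕ) (v : List ℕ),
    expandFrom k u = expandFrom k v → u = v := by
  intro u
  induction u with
  | nil =>
    intro k v h
    cases v with
    | nil => rfl
    | cons b rest => exact absurd h (by simp [expandFrom])
  | cons a rest ih =>
    intro k v h
    cases v with
    | nil => exact absurd h (by simp [expandFrom])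
    | cons b rest₂ =>
      simp only [expandFrom, List.cons_append, List.cons.injEq] at h
      obtain ⟨rfl, h2⟩ := h
      have h3 : expandFrom (k+1) rest = expandFrom (k+1) rest₂ :=
        List.append_cancel_left h2
      rw [ih (k+1) rest₂ h3]

lemma glen_succ : ∀ (n k : ℕ), glen k (n+1) = glen k n + (k + n + 1) := by
  intro n
  induction n with
  | zero => intro k; simp [glen]
  | succ n ih =>
    intro k
    show (k+1) + glen (k+1) (n+1) = ((k+1) + glen (k+1) n) + (k + (n+1) + 1)
    rw [ih (k+1)]
    omega

lemma glen_strictMono (k : ℕ) : StrictMono (glen k) := by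
  apply strictMono_nat_of_lt_succ
  intro n
  rw [glen_succ]
  omega

lemma le_glen (n : ℕ) : n ≤ glen 0 n := by
  induction n with
  | zero => simp [glen]
  | succ n ih => rw [glen_succ]; omega

/-! ### Rays of T0 -/

lemma ray_len {r : ℕ → List ℕ} (hr : IsRay T0 r) : ∀ n, (r n).length = n := by
  intro n
  induction n with
  | zero => rw [hr.1]; rfl
  | succ n ih =>
    obtain ⟨a, ha⟩ := (hr.2 n).2
    rw [ha, List.length_append, ih]
    rfl

lemma ray_prefix {r : ℕ → List ℕ} (hr : IsRay T0 r) : ∀ m n, m ≤ n → r m <+: r n := by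
  intro m n hmn
  induction n, hmn using Nat.le_induction with
  | base => exact List.prefix_refl _
  | succ n hmn ih =>
    obtain ⟨a, ha⟩ := (hr.2 n).2
    rw [ha]
    exact ih.trans (List.prefix_append _ _)

lemma prefix_eq_of_length {u v t : List ℕ} (hu : u <+: t) (hv : v <+: t)
    (h : u.length = v.length) : u = v := by
  rcases List.prefix_or_prefix_of_prefix hu hv with h1 | h1
  · exact h1.eq_of_length h
  · exact (h1.eq_of_length h.symm).symm

lemma ray_level_word {r : ℕ → List ℕ} (hr : IsRay T0 r) (m : ℕ) :
    ∃ i, i < 2 ^ m ∧ r (glen 0 m) = expandFrom 0 (V m i) := by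
  obtain ⟨w, hw, hpre⟩ := (hr.2 (glen 0 m)).1
  obtain ⟨n, hwn⟩ := hw
  obtain ⟨iw, hiw, rfl⟩ := mem_T13Level_iff.1 hwn
  have hlen1 : (r (glen 0 m)).length = glen 0 m := ray_len hr _
  have hle : glen 0 m ≤ glen 0 n := by
    have := hpre.length_le
    rwa [hlen1, length_expandFrom, V_length n iw hiw] at this
  have hmn : m ≤ n := ((glen_strictMono 0).le_iff_le).1 hle
  obtain ⟨i₂, hi₂, htake⟩ := V_take n iw hiw m hmn
  refine ⟨i₂, hi₂, ?_⟩
  have hsplit : V n iw = (V n iw).take m ++ (V n iw).drop m := (List.take_append_drop _ _).symm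
  have h1 : expandFrom 0 (V m i₂) <+: expandFrom 0 (V n iw) := by
    conv_rhs => rw [hsplit]
    rw [expandFrom_append, htake]
    exact List.prefix_append _ _
  apply prefix_eq_of_length hpre h1
  rw [hlen1, length_expandFrom, V_length m i₂ hi₂]

/-- The positions of the T13-levels along a ray of T0. -/
lemma ray_positions {r : ℕ → List ℕ} (hr : IsRay T0 r) :
    ∃ p : ℕ → ℕ, (∀ m, p m < 2 ^ m) ∧ (∀ m, r (glen 0 m) = expandFrom 0 (V m (p m))) ∧
      (∀ m, ∃ j, j < childCount m (p m) ∧ p (m+1) = cstart m (p m) + j) := by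
  choose p hp hpr using ray_level_word hr
  refine ⟨p, hp, hpr, ?_⟩
  intro m
  obtain ⟨i, hi, j, hj, hdec⟩ := decomp (hp (m+1))
  have hc := V_child hi hj
  -- expandFrom 0 (V m (p m)) is a prefix of expandFrom 0 (V (m+1) (p (m+1)))
  have hpre : expandFrom 0 (V m (p m)) <+: expandFrom 0 (V (m+1) (p (m+1))) := by
    rw [← hpr m, ← hpr (m+1)]
    exact ray_prefix hr _ _ ((glen_strictMono 0).monotone (by omega))
  have hpre2 : expandFrom 0 (V m i) <+: expandFrom 0 (V (m+1) (p (m+1))) := by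
    rw [hdec, hc, expandFrom_append]
    exact List.prefix_append _ _
  have heq : expandFrom 0 (V m (p m)) = expandFrom 0 (V m i) := by
    apply prefix_eq_of_length hpre hpre2
    rw [length_expandFrom, length_expandFrom, V_length m (p m) (hp m), V_length m i hi]
  have : V m (p m) = V m i := expandFrom_inj _ _ _ heq
  have : p m = i := V_inj m (p m) (hp m) i hi this
  subst this
  exact ⟨j, hj, hdec⟩

/-! ### The key dichotomy for rays -/

lemma ray_hits {r : ℕ → List ℕ} (hr : IsRay T0 r) (N M : ℕ) (hN : 1 ≤ N) (hM : 3*N ≤ M) :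
    (∃ n, r n = expandFrom 0 (V N (2^N - 1))) ∨
      (∃ i, i < 2 ^ (3*N) ∧ ∃ n, r n = expandFrom 0 (V M i)) := by
  obtain ⟨p, hp, hpr, hstep⟩ := ray_positions hr
  by_cases hleft : ∃ m, 1 ≤ m ∧ m ≤ 3*N ∧ p m < 2 ^ (m-1)
  · -- ray enters the non-branching left part by level 3N; stays there with constant position
    obtain ⟨m, hm1, hm2, hml⟩ := hleft
    right
    have hconst : ∀ k, p (m+k) = p m ∧ p (m+k) < 2 ^ (m+k-1) := by
      intro k
      induction k with
      | zero => exact ⟨rfl, hml⟩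
      | succ k ih =>
        obtain ⟨heq, hlt⟩ := ih
        obtain ⟨j, hj, hdec⟩ := hstep (m+k)
        have hmk : m + k ≠ 0 := by omega
        have hcc : childCount (m+k) (p (m+k)) = 1 := by
          simp [childCount, hmk, hlt]
          omega
        have hj0 : j = 0 := by omega
        have hcs : cstart (m+k) (p (m+k)) = p (m+k) := cstart_left hmk (le_of_lt hlt)
        have hpe : p (m+k+1) = p m := by omega
        constructor
        · rw [show m + (k+1) = m+k+1 from by omega, hpe]
        · rw [show m + (k+1) = m+k+1 from by omega, hpe, ← heq]
          calc p (m+k) < 2 ^ (m+k-1) := hlt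
          _ ≤ 2 ^ (m+k+1-1) := Nat.pow_le_pow_right (by norm_num) (by omega)
    have hpM : p M = p m := by
      have := (hconst (M - m)).1
      rwa [show m + (M - m) = M from by omega] at this
    refine ⟨p M, ?_, glen 0 M, hpr M⟩
    rw [hpM]
    calc p m < 2 ^ (m-1) := hml
    _ ≤ 2 ^ (3*N) := Nat.pow_le_pow_right (by norm_num) (by omega)
  · -- ray stays in the branching right part up to level 3N
    push_neg at hleft
    by_cases hrm : p N = 2 ^ N - 1
    · left
      exact ⟨glen 0 N, by rw [hpr N, hrm]⟩
    · exfalso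
      -- distance from the right end at least triples at each level
      have hSN : p N + 2 ≤ 2 ^ N := by
        have := hp N
        omega
      have hgrow : ∀ k, k ≤ 2*N → 3 ^ k * (2 ^ N - 1 - p N) + p (N + k) + 1 ≤ 2 ^ (N + k) := by
        intro k hk
        induction k with
        | zero =>
          simp only [pow_zero, one_mul, Nat.add_zero]
          omega
        | succ k ih =>
          have hk' : k ≤ 2*N := by omega
          have ihh := ih hk'
          obtain ⟨j, hj, hdec⟩ := hstep (N + k)
          have hm1' : (1:ℕ) ≤ N + k := by omega
          have hm2' : N + k ≤ 3*N := by omega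
          have hcore : 2 ^ (N+k-1) ≤ p (N+k) := hleft (N+k) hm1' hm2'
          have hcs := cstart_right (show N+k ≠ 0 by omega) hcore
          have hj2 : j ≤ 2 := by
            have := childCount_le (N+k) (p (N+k))
            omega
          have hdec' : p (N+k+1) + 2 ^ (N+k) = 3 * p (N+k) + j := by omega
          have hpow : 2 ^ (N+k+1) = 2 * 2 ^ (N+k) := by ring
          have h3 : (3:ℕ) ^ (k+1) = 3 * 3 ^ k := by ring
          rw [show N + (k+1) = N+k+1 from by omega]
          have hplt := hp (N+k)
          -- goal : 3^(k+1) * (2^N - 1 - p N) + p (N+k+1) + 1 ≤ 2^(N+k+1)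
          nlinarith [ihh, hdec', hpow, h3, hj2]
        
      have h2N := hgrow (2*N) le_rfl
      have hcore3 : 2 ^ (3*N-1) ≤ p (3*N) := hleft (3*N) (by omega) (by omega)
      have h9 : (8:ℕ) ^ N ≤ 9 ^ N := Nat.pow_le_pow_left (by norm_num) N
      have h89 : (3:ℕ) ^ (2*N) = 9 ^ N := by rw [pow_mul]; norm_num
      have h8 : (2:ℕ) ^ (3*N) = 8 ^ N := by rw [pow_mul]; norm_num
      have hhalf : 2 * 2 ^ (3*N-1) = 2 ^ (3*N) := by
        rw [← pow_succ']
        congr 1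
        omega
      rw [show N + 2*N = 3*N from by omega, h89] at h2N
      have h9S : 9 ^ N ≤ 9 ^ N * (2 ^ N - 1 - p N) :=
        Nat.le_mul_of_pos_right _ (by omega)
      omega

end IbrAux


namespace IbrAux
open TreeNotions Filter ENNReal

lemma E_mem_T0 {m i : ℕ} (hi : i < 2 ^ m) : expandFrom 0 (V m i) ∈ T0 :=
  ⟨V m i, ⟨m, mem_T13Level_iff.2 ⟨i, hi, rfl⟩⟩, List.prefix_refl _⟩

lemma E_ne_nil {m i : ℕ} (hm : 1 ≤ m) (hi : i < 2 ^ m) : expandFrom 0 (V m i) ≠ [] := by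
  intro h
  have h1 := congrArg List.length h
  rw [length_expandFrom, V_length m i hi] at h1
  simp only [List.length_nil] at h1
  have h2 := le_glen m
  omega

/-- The cutset. -/
noncomputable def cut (N M : ℕ) : Finset (List ℕ) :=
  insert (expandFrom 0 (V N (2^N - 1)))
    ((Finset.range (2 ^ (3*N))).image (fun i => expandFrom 0 (V M i)))

lemma cut_isCutset {N M : ℕ} (hN : 1 ≤ N) (hM : 3*N ≤ M) :
    IsCutset T0 ↑(cut N M) := by
  constructor
  · intro v hv
    simp only [cut, Finset.coe_insert, Set.mem_insert_iff, Finset.coe_image,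
      Finset.coe_range, Set.mem_image, Set.mem_Iio] at hv
    have hM1 : 1 ≤ M := by omega
    rcases hv with rfl | ⟨i, hi, rfl⟩
    · have hlt : 2^N - 1 < 2^N := by
        have := Nat.one_le_two_pow (n := N); omega
      exact ⟨E_mem_T0 hlt, E_ne_nil hN hlt⟩
    · have hlt : i < 2 ^ M := lt_of_lt_of_le hi (Nat.pow_le_pow_right (by norm_num) hM)
      exact ⟨E_mem_T0 hlt, E_ne_nil hM1 hlt⟩
  · intro r hr
    rcases ray_hits hr N M hN hM with ⟨n, hn⟩ | ⟨i, hi, n, hn⟩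
    · exact ⟨n, by simp [cut, hn]⟩
    · refine ⟨n, ?_⟩
      simp only [cut, Finset.coe_insert, Set.mem_insert_iff, Finset.coe_image,
        Finset.coe_range, Set.mem_image, Set.mem_Iio]
      exact Or.inr ⟨i, hi, hn.symm⟩

lemma term_mono {lam : ℝ} (hlam : 0 < lam) {m L : ℕ} (h : m ≤ L) :
    ENNReal.ofReal (Real.exp (-(L:ℝ) ^ lam)) ≤ ENNReal.ofReal (Real.exp (-(m:ℝ) ^ lam)) := by
  apply ENNReal.ofReal_le_ofReal
  rw [Real.exp_le_exp]
  have : ((m:ℝ)) ^ lam ≤ ((L:ℝ)) ^ lam :=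
    Real.rpow_le_rpow (by positivity) (by exact_mod_cast h) hlam.le
  linarith

lemma cut_sum {lam : ℝ} (hlam : 0 < lam) {N M : ℕ} (hN : 1 ≤ N) (hM : 3*N ≤ M) :
    (∑' e : ↑(↑(cut N M) : Set (List ℕ)),
        ENNReal.ofReal (Real.exp (-((e : List ℕ).length : ℝ) ^ lam)))
      ≤ ENNReal.ofReal (Real.exp (-(N:ℝ) ^ lam))
        + (2 ^ (3*N) : ℕ) * ENNReal.ofReal (Real.exp (-(M:ℝ) ^ lam)) := by
  classical
  rw [Finset.tsum_subtype' (cut N M)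
    (fun e => ENNReal.ofReal (Real.exp (-((e : List ℕ).length : ℝ) ^ lam)))]
  unfold cut
  refine le_trans (b := ENNReal.ofReal (Real.exp (-((expandFrom 0 (V N (2^N-1))).length : ℝ) ^ lam))
      + ∑ e ∈ (Finset.range (2 ^ (3*N))).image (fun i => expandFrom 0 (V M i)),
          ENNReal.ofReal (Real.exp (-((e : List ℕ).length : ℝ) ^ lam))) ?_ ?_
  · -- sum over insert
    by_cases h : expandFrom 0 (V N (2^N-1)) ∈
        (Finset.range (2 ^ (3*N))).image (fun i => expandFrom 0 (V M i))
    · rw [Finset.insert_eq_self.2 h]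
      exact le_add_self
    · rw [Finset.sum_insert h]
  · refine add_le_add ?_ ?_
    · -- root term
      apply term_mono hlam
      have hlt : 2^N - 1 < 2^N := by
        have := Nat.one_le_two_pow (n := N); omega
      rw [length_expandFrom, V_length N _ hlt]
      exact le_glen N
    · -- image part
      have hMpow : 2 ^ (3*N) ≤ 2 ^ M := Nat.pow_le_pow_right (by norm_num) hM
      rw [Finset.sum_image (by
        intro x hx y hy hxy
        simp only [Finset.mem_coe, Finset.mem_range] at hx hy
        exact V_inj M x (lt_of_lt_of_le hx hMpow) y (lt_of_lt_of_le hy hMpow)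
          (expandFrom_inj _ _ _ hxy))]
      have hbound : ∀ i ∈ Finset.range (2 ^ (3*N)),
          ENNReal.ofReal (Real.exp (-((expandFrom 0 (V M i)).length : ℝ) ^ lam))
            ≤ ENNReal.ofReal (Real.exp (-(M:ℝ) ^ lam)) := by
        intro i hi
        simp only [Finset.mem_range] at hi
        apply term_mono hlam
        rw [length_expandFrom, V_length M i (lt_of_lt_of_le hi hMpow)]
        exact le_glen M
      calc ∑ i ∈ Finset.range (2 ^ (3*N)),
            ENNReal.ofReal (Real.exp (-((expandFrom 0 (V M i)).length : ℝ) ^ lam))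
          ≤ ∑ _i ∈ Finset.range (2 ^ (3*N)), ENNReal.ofReal (Real.exp (-(M:ℝ) ^ lam)) :=
            Finset.sum_le_sum hbound
        _ = (2 ^ (3*N) : ℕ) * ENNReal.ofReal (Real.exp (-(M:ℝ) ^ lam)) := by
            rw [Finset.sum_const, Finset.card_range, nsmul_eq_mul]

/-- For every `lam > 0` and `ε > 0` there is a good cutset. -/
lemma exists_cutset (lam : ℝ) (hlam : 0 < lam) (ε : ℝ) (hε : 0 < ε) :
    ∃ π : Set (List ℕ), IsCutset T0 π ∧
      (∑' e : π, ENNReal.ofReal (Real.exp (-((e : List ℕ).length : ℝ) ^ lam)))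
        ≤ ENNReal.ofReal ε := by
  have hexp : Tendsto (fun n : ℕ => Real.exp (-(n:ℝ) ^ lam)) atTop (nhds 0) := by
    apply Real.tendsto_exp_atBot.comp
    apply Filter.tendsto_neg_atTop_atBot.comp
    exact (tendsto_rpow_atTop hlam).comp tendsto_natCast_atTop_atTop
  -- choose N
  have h1 : ∀ᶠ n : ℕ in atTop, Real.exp (-(n:ℝ) ^ lam) < ε/2 :=
    hexp.eventually (gt_mem_nhds (by positivity))
  obtain ⟨N, hN1, hN2⟩ := (h1.and (eventually_ge_atTop 1)).exists
  -- choose M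
  have hexp2 : Tendsto (fun n : ℕ => (2 ^ (3*N) : ℝ) * Real.exp (-(n:ℝ) ^ lam)) atTop (nhds 0) := by
    have := hexp.const_mul (2 ^ (3*N) : ℝ)
    simpa using this
  have h2 : ∀ᶠ n : ℕ in atTop, (2 ^ (3*N) : ℝ) * Real.exp (-(n:ℝ) ^ lam) < ε/2 :=
    hexp2.eventually (gt_mem_nhds (by positivity))
  obtain ⟨M, hM1, hM2⟩ := (h2.and (eventually_ge_atTop (3*N))).exists
  refine ⟨↑(cut N M), cut_isCutset hN2 hM2, ?_⟩
  calc (∑' e : ↑(↑(cut N M) : Set (List ℕ)),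
          ENNReal.ofReal (Real.exp (-((e : List ℕ).length : ℝ) ^ lam)))
      ≤ ENNReal.ofReal (Real.exp (-(N:ℝ) ^ lam))
        + (2 ^ (3*N) : ℕ) * ENNReal.ofReal (Real.exp (-(M:ℝ) ^ lam)) :=
        cut_sum hlam hN2 hM2
    _ ≤ ENNReal.ofReal (ε/2) + ENNReal.ofReal (ε/2) := by
        refine add_le_add (ENNReal.ofReal_le_ofReal hN1.le) ?_
        have : ((2 ^ (3*N) : ℕ) : ℝ≥0∞) * ENNReal.ofReal (Real.exp (-(M:ℝ) ^ lam))
              = ENNReal.ofReal ((2 ^ (3*N) : ℝ) * Real.exp (-(M:ℝ) ^ lam)) := by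
            rw [ENNReal.ofReal_mul (by positivity)]
            congr 1
            rw [← ENNReal.ofReal_natCast]
            congr 1
            push_cast
            ring
        rw [this]
        exact ENNReal.ofReal_le_ofReal hM1.le
    _ = ENNReal.ofReal ε := by
        rw [← ENNReal.ofReal_add (by positivity) (by positivity)]
        ring_nf

end IbrAux

open TreeNotions Filter ENNReal in
/-- The intermediate branching number of the subdivided 1-3 tree `T₀` is `0`:
for every `λ > 0` and `ε > 0`, there is a cutset `π` with `∑_{e ∈ π} exp(-|e|^λ) ≤ ε`. -/
theorem Ibr_T0 :
    Ibr T0 = 0 ∧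
    ∀ lam : ℝ, 0 < lam → ∀ ε : ℝ, 0 < ε → ∃ π : Set (List ℕ), IsCutset T0 π ∧
      (∑' e : π, ENNReal.ofReal (Real.exp (-((e : List ℕ).length : ℝ) ^ lam)))
        ≤ ENNReal.ofReal ε := by
  constructor
  · unfold Ibr
    convert Real.sSup_empty using 2
    rw [Set.eq_empty_iff_forall_notMem]
    rintro lam ⟨hlam, hpos⟩
    set I := ⨅ (π) (_ : IsCutset T0 π),
      ∑' e : π, ENNReal.ofReal (Real.exp (-((e : List ℕ).length : ℝ) ^ lam)) with hI
    have hle : ∀ ε : ℝ, 0 < ε → I ≤ ENNReal.ofReal ε := by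
      intro ε hε
      obtain ⟨π, hcut, hsum⟩ := IbrAux.exists_cutset lam hlam ε hε
      exact le_trans (iInf₂_le π hcut) hsum
    have hne : I ≠ ⊤ := by
      intro h
      have := hle 1 one_pos
      rw [h] at this
      exact (ENNReal.ofReal_lt_top.trans_le this).false
    have h0 : 0 < I.toReal := ENNReal.toReal_pos hpos.ne' hne
    have h2 : ENNReal.ofReal (I.toReal / 2) < I := by
      rw [ENNReal.ofReal_lt_iff_lt_toReal (by linarith) hne]
      linarith
    exact absurd (hle (I.toReal / 2) (by linarith)) (not_le.2 h2)
  · exact IbrAux.exists_cutset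
end

section
/- Let T₀ = Φ(E₀) be the subdivided 1-3 tree viewed as a labelled subtree of the ternary tree, let E_j = S^j(E₀) under the left shift S, Ẽ = ⋃_{j≥0} E_j, and T̃ = Φ(Ẽ). Then there is a constant C > 0 such that the number of vertices of T̃ at level n is at most 3^{C√n} for all n ≥ 1. -/
open Filter ENNReal

section Aux
open TreeNotions

/-- position increments in the subdivided tree starting at nesting level `k`. -/
def epos : ℕ → ℕ → ℕ
  | _, 0 => 0
  | k, t+1 => (k+1) + epos (k+1) t

lemma epos_succ (k t : ℕ) : epos k (t+1) = epos k t + (k+t+1) := by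
  induction t generalizing k with
  | zero => simp [epos]
  | succ t ih =>
    show (k+1) + epos (k+1) (t+1) = ((k+1) + epos (k+1) t) + (k+(t+1)+1)
    rw [ih (k+1)]; omega

/-- triangular numbers. -/
def tri (m : ℕ) : ℕ := epos 0 m

lemma tri_succ (m : ℕ) : tri (m+1) = tri m + (m+1) := by
  simpa [tri] using epos_succ 0 m

lemma tri_le_tri {m m' : ℕ} (h : m ≤ m') : tri m ≤ tri m' := by
  induction m' with
  | zero => simp_all
  | succ m' ih =>
    rcases Nat.lt_or_ge m (m'+1) with h' | h'
    · have := ih (by omega); rw [tri_succ]; omega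
    · have : m = m' + 1 := by omega
      subst this; rfl

lemma self_le_tri (m : ℕ) : m ≤ tri m := by
  induction m with
  | zero => simp [tri, epos]
  | succ m ih => rw [tri_succ]; omega

lemma two_mul_tri (m : ℕ) : 2 * tri m = m * (m+1) := by
  induction m with
  | zero => simp [tri, epos]
  | succ m ih => rw [tri_succ]; ring_nf; ring_nf at ih; omega

lemma childCount_le (n i : ℕ) : childCount n i ≤ 3 := by
  unfold childCount
  split
  · omega
  · split <;> omega

lemma t13_lt3 : ∀ n, ∀ w ∈ T13Level n, ∀ a ∈ w, a < 3 := by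
  intro n
  induction n with
  | zero =>
    intro w hw a ha
    simp [T13Level] at hw
    subst hw; simp at ha
  | succ n ih =>
    intro w hw a ha
    rw [T13Level, List.mem_flatMap] at hw
    obtain ⟨⟨v, i⟩, hp, hw⟩ := hw
    rw [List.mem_map] at hw
    obtain ⟨j, hj, rfl⟩ := hw
    have hv : v ∈ T13Level n := by
      have := List.mk_mem_zipIdx_iff_getElem?.mp hp
      exact List.mem_of_getElem? this
    rcases List.mem_append.mp ha with h | h
    · exact ih v hv a h
    · have : a = j := by simpa using h
      subst this
      have := childCount_le n (v, i).2
      have := List.mem_range.mp hj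
      omega

lemma replicate_getD (k j : ℕ) : (List.replicate k (0:ℕ)).getD j 0 = 0 := by
  rw [List.getD_eq_getElem?_getD, List.getElem?_getD_replicate_default_eq]

lemma expandFrom_entry (w : List ℕ) : ∀ k i, (expandFrom k w).getD i 0 ≠ 0 →
    (∃ t, i = epos k t) ∧ (expandFrom k w).getD i 0 ∈ w := by
  induction w with
  | nil => intro k i h; simp [expandFrom, List.getD] at h
  | cons a rest ih =>
    intro k i h
    have hrw : expandFrom k (a :: rest) = (a :: List.replicate k 0) ++ expandFrom (k+1) rest := rfl
    rw [hrw] at h ⊢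
    rcases Nat.lt_or_ge i (k+1) with hi | hi
    · rcases Nat.eq_zero_or_pos i with rfl | hpos
      · refine ⟨⟨0, rfl⟩, ?_⟩
        simp [List.getD]
      · exfalso
        apply h
        have hlen : i < (a :: List.replicate k 0).length := by simp; omega
        rw [List.getD_append _ _ _ _ hlen]
        obtain ⟨j, rfl⟩ : ∃ j, i = j + 1 := ⟨i - 1, by omega⟩
        show (List.replicate k (0:ℕ)).getD j 0 = 0
        exact replicate_getD k j
    · have hlen : (a :: List.replicate k 0).length ≤ i := by simp; omega
      rw [List.getD_append_right _ _ _ _ hlen] at h ⊢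
      have hlen' : (a :: List.replicate k 0).length = k + 1 := by simp
      rw [hlen'] at h ⊢
      obtain ⟨⟨t, ht⟩, hmem⟩ := ih (k+1) (i - (k+1)) h
      refine ⟨⟨t+1, ?_⟩, List.mem_cons_of_mem a hmem⟩
      show i = (k+1) + epos (k+1) t
      omega

lemma pref_getD {x : ℕ → ℕ} {n i : ℕ} (hi : i < n) : (pref x n).getD i 0 = x i := by
  simp [pref, List.getD, List.getElem?_map, List.getElem?_range, hi]

lemma prefix_getD {l1 l2 : List ℕ} (h : l1 <+: l2) {i : ℕ} (hi : i < l1.length) :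
    l2.getD i 0 = l1.getD i 0 := by
  obtain ⟨t, rfl⟩ := h
  rw [List.getD_append _ _ _ _ hi]

lemma E0_struct {x : ℕ → ℕ} (hx : x ∈ E0) (i : ℕ) :
    x i < 3 ∧ (x i ≠ 0 → ∃ m, i = tri m) := by
  obtain ⟨w, hw, hpre⟩ := hx (i+1)
  have hlen : i < (pref x (i+1)).length := by simp [pref]
  have hx1 : (expandFrom 0 w).getD i 0 = x i := by
    rw [prefix_getD hpre hlen, pref_getD (by omega)]
  by_cases h0 : x i = 0
  · exact ⟨by omega, fun h => absurd h0 h⟩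
  · have hne : (expandFrom 0 w).getD i 0 ≠ 0 := by rw [hx1]; exact h0
    obtain ⟨⟨t, ht⟩, hmem⟩ := expandFrom_entry w 0 i hne
    obtain ⟨nn, hwn⟩ := hw
    have h3 : x i < 3 := by rw [← hx1]; exact t13_lt3 nn w hwn _ hmem
    exact ⟨h3, fun _ => ⟨t, ht⟩⟩

lemma shift_iterate (s : ℕ) : ∀ (y : ℕ → ℕ) (i : ℕ), (shift^[s] y) i = y (i + s) := by
  induction s with
  | zero => intro y i; simp
  | succ s ih =>
    intro y i
    rw [Function.iterate_succ_apply, ih (shift y) i]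
    rfl

/-- positions along a shifted triangular pattern. -/
def posIdx (p0 g : ℕ) : ℕ → ℕ
  | 0 => p0
  | r+1 => posIdx p0 g r + (g + r)

lemma posIdx_ge (p0 g r : ℕ) : p0 ≤ posIdx p0 g r := by
  induction r with
  | zero => exact le_refl _
  | succ r ih => show p0 ≤ posIdx p0 g r + (g + r); omega

lemma posIdx_ge_of_pos (p0 g : ℕ) {r : ℕ} (hr : 1 ≤ r) : p0 + g ≤ posIdx p0 g r := by
  induction r with
  | zero => omega
  | succ r ih =>
    show p0 + g ≤ posIdx p0 g r + (g + r)
    have := posIdx_ge p0 g r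
    omega

lemma tri_le_posIdx (p0 : ℕ) {g : ℕ} (hg : 1 ≤ g) (r : ℕ) : tri r ≤ posIdx p0 g r := by
  induction r with
  | zero => show tri 0 ≤ p0; simp [tri, epos]
  | succ r ih =>
    show tri (r+1) ≤ posIdx p0 g r + (g + r)
    rw [tri_succ]
    omega

lemma tri_posIdx {s t0 : ℕ} (hs : s ≤ tri t0) (r : ℕ) :
    tri (t0 + r) = s + posIdx (tri t0 - s) (t0 + 1) r := by
  induction r with
  | zero => show tri t0 = s + (tri t0 - s); omega
  | succ r ih =>
    have h1 : tri (t0 + r + 1) = tri (t0 + r) + (t0 + r + 1) := tri_succ _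
    show tri (t0 + (r+1)) = s + (posIdx (tri t0 - s) (t0+1) r + ((t0+1) + r))
    have : t0 + (r + 1) = t0 + r + 1 := by omega
    rw [this, h1, ih]
    omega

lemma Etilde_struct {x : ℕ → ℕ} (hx : x ∈ Etilde) {n : ℕ} (hn : 1 ≤ n) :
    (∀ i, x i < 3) ∧ ∃ p0 g, p0 ≤ n ∧ 1 ≤ g ∧ g ≤ n ∧
      ∀ i < n, x i ≠ 0 → ∃ r, i = posIdx p0 g r := by
  rw [Etilde, Set.mem_iUnion] at hx
  obtain ⟨s, y, hy, rfl⟩ := hx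
  have hval : ∀ i, shift^[s] y i = y (i + s) := fun i => shift_iterate s y i
  have h3 : ∀ i, shift^[s] y i < 3 := fun i => by rw [hval i]; exact (E0_struct hy _).1
  refine ⟨h3, ?_⟩
  have htri : ∀ i, shift^[s] y i ≠ 0 → ∃ m, i + s = tri m := by
    intro i h
    rw [hval i] at h
    exact (E0_struct hy _).2 h
  have hex : ∃ m, s ≤ tri m := ⟨s, self_le_tri s⟩
  obtain ⟨t0, ht0, hmin⟩ : ∃ t0, s ≤ tri t0 ∧ ∀ m < t0, tri m < s :=
    ⟨Nat.find hex, Nat.find_spec hex, fun m hm => by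
      have := Nat.find_min hex hm; omega⟩
  have hkey : ∀ i < n, shift^[s] y i ≠ 0 → ∃ r, i = posIdx (tri t0 - s) (t0 + 1) r := by
    intro i hi h
    obtain ⟨m, hm⟩ := htri i h
    have hmt0 : t0 ≤ m := by
      by_contra hc
      have := hmin m (by omega)
      omega
    refine ⟨m - t0, ?_⟩
    have := tri_posIdx ht0 (m - t0)
    rw [show t0 + (m - t0) = m by omega] at this
    omega
  rcases Nat.lt_or_ge (tri t0 - s) n with hlt | hge
  · rcases le_or_gt (t0 + 1) n with hle | hgt
    · exact ⟨tri t0 - s, t0 + 1, by omega, by omega, hle, hkey⟩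
    · refine ⟨tri t0 - s, n, by omega, hn, le_refl n, ?_⟩
      intro i hi h
      obtain ⟨r, hr⟩ := hkey i hi h
      rcases Nat.eq_zero_or_pos r with rfl | hrpos
      · exact ⟨0, hr⟩
      · exfalso
        have := posIdx_ge_of_pos (tri t0 - s) (t0 + 1) hrpos
        omega
  · refine ⟨n, n, le_refl n, hn, le_refl n, ?_⟩
    intro i hi h
    exfalso
    obtain ⟨r, hr⟩ := hkey i hi h
    have := posIdx_ge (tri t0 - s) (t0 + 1) r
    omega

lemma tri_K_bound (n : ℕ) : n ≤ tri (2 * Nat.sqrt n + 2) := by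
  set s := Nat.sqrt n
  have h1 : n < (s+1) * (s+1) := Nat.lt_succ_sqrt n
  have h2 : 2 * tri (2*s+2) = (2*s+2) * (2*s+3) := two_mul_tri _
  nlinarith

/-- Reconstruction map: a word of length `n` from (first position, gap, pattern values). -/
noncomputable def recon (n K : ℕ) (a : Fin (n+1) × Fin (n+1) × (Fin K → Fin 3)) : List ℕ :=
  (List.range n).map fun i =>
    if h : ∃ r : Fin K, posIdx a.1 a.2.1 (r : ℕ) = i then (a.2.2 h.choose : ℕ) else 0

lemma card_bound (n : ℕ) (hn : 1 ≤ n) :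
    Nat.card (level Ttilde n) ≤ (n+1) * ((n+1) * 3 ^ (2 * Nat.sqrt n + 2)) := by
  set K := 2 * Nat.sqrt n + 2 with hKdef
  have hKtri : n ≤ tri K := tri_K_bound n
  have hsub : level Ttilde n ⊆ Set.range (recon n K) := by
    rintro v ⟨⟨x, hxE, m, rfl⟩, hlen⟩
    have hm : n = m := by
      have : m = n := by simpa [pref] using hlen
      omega
    subst hm
    obtain ⟨h3, p0, g, hp0, hg1, hgn, hstruct⟩ := Etilde_struct hxE hn
    refine ⟨⟨⟨p0, by omega⟩, ⟨g, by omega⟩, fun r => ⟨x (posIdx p0 g (r : ℕ)), h3 _⟩⟩, ?_⟩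
    unfold recon pref
    refine List.map_congr_left ?_
    intro i hi
    have hi' : i < n := List.mem_range.mp hi
    split
    · next h =>
      exact congrArg x h.choose_spec
    · next h =>
      by_contra hne
      have hne' : x i ≠ 0 := fun h0 => hne (by rw [h0])
      obtain ⟨r, hr⟩ := hstruct i hi' hne'
      have hrK : r < K := by
        by_contra hc
        have h1 : tri K ≤ tri r := tri_le_tri (by omega)
        have h2 : tri r ≤ posIdx p0 g r := tri_le_posIdx p0 hg1 r
        omega
      exact h ⟨⟨r, hrK⟩, hr.symm⟩
  calc Nat.card (level Ttilde n) = (level Ttilde n).ncard := (Nat.card_coe_set_eq _)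
    _ ≤ (Set.range (recon n K)).ncard :=
        Set.ncard_le_ncard hsub (Set.finite_range _)
    _ ≤ Nat.card (Fin (n+1) × Fin (n+1) × (Fin K → Fin 3)) := by
        rw [← Set.image_univ]
        exact (Set.ncard_image_le Set.finite_univ).trans (le_of_eq (Set.ncard_univ _))
    _ = (n+1) * ((n+1) * 3 ^ K) := by
        simp [Nat.card_eq_fintype_card]

end Aux

open TreeNotions Filter ENNReal in
/-- The number of vertices of `T̃` at level `n` is at most `3 ^ (C √n)` for some `C > 0`. -/
theorem Ttilde_level_card_le :
    ∃ C : ℝ, 0 < C ∧ ∀ n : ℕ, 1 ≤ n →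
      (Nat.card (level Ttilde n) : ℝ) ≤ 3 ^ (C * Real.sqrt n) := by
  refine ⟨8, by norm_num, ?_⟩
  intro n hn
  have hcard := card_bound n hn
  set K := 2 * Nat.sqrt n + 2 with hKdef
  set S := Real.sqrt n with hSdef
  have hS0 : (0:ℝ) ≤ S := Real.sqrt_nonneg _
  have hS1 : (1:ℝ) ≤ S := by
    rw [hSdef, show (1:ℝ) = Real.sqrt 1 by simp]
    exact Real.sqrt_le_sqrt (by exact_mod_cast hn)
  have hSsq : S ^ 2 = n := Real.sq_sqrt (by positivity)
  have hlog : (1:ℝ) ≤ Real.log 3 := by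
    rw [Real.le_log_iff_exp_le (by norm_num)]
    calc Real.exp 1 ≤ 2.7182818286 := Real.exp_one_lt_d9.le
      _ ≤ 3 := by norm_num
  have hbase : (1:ℝ) + S ≤ (3:ℝ) ^ S := by
    rw [Real.rpow_def_of_pos (by norm_num : (0:ℝ) < 3)]
    have h1 : Real.log 3 * S + 1 ≤ Real.exp (Real.log 3 * S) :=
      Real.add_one_le_exp _
    nlinarith
  have hrpow_pos : (0:ℝ) < (3:ℝ) ^ S := Real.rpow_pos_of_pos (by norm_num) _
  have hn1 : ((n:ℝ) + 1) ≤ ((3:ℝ) ^ S) ^ 2 := by nlinarith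
  have hKle : (K:ℝ) ≤ 4 * S := by
    have h1 : (Nat.sqrt n : ℝ) ≤ S := by
      rw [hSdef]
      rw [show ((Nat.sqrt n : ℕ) : ℝ) = Real.sqrt ((Nat.sqrt n : ℝ)^2) by
        rw [Real.sqrt_sq (by positivity)]]
      apply Real.sqrt_le_sqrt
      exact_mod_cast by nlinarith [Nat.sqrt_le' n]
    rw [hKdef]
    push_cast
    nlinarith
  have h3K : ((3:ℝ) ^ K : ℝ) ≤ (3:ℝ) ^ (4 * S) := by
    calc ((3:ℝ) ^ K : ℝ) = (3:ℝ) ^ ((K : ℕ) : ℝ) := (Real.rpow_natCast 3 K).symm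
      _ ≤ (3:ℝ) ^ (4 * S) := Real.rpow_le_rpow_of_exponent_le (by norm_num) hKle
  have hfinal : ((3:ℝ) ^ S) ^ 2 * (((3:ℝ) ^ S) ^ 2 * (3:ℝ) ^ (4 * S)) =
      (3:ℝ) ^ (8 * S) := by
    rw [← Real.rpow_natCast ((3:ℝ) ^ S) 2, ← Real.rpow_mul (by norm_num : (0:ℝ) ≤ 3),
      ← Real.rpow_add (by norm_num : (0:ℝ) < 3), ← Real.rpow_add (by norm_num : (0:ℝ) < 3)]
    norm_num
    ring_nf
  calc (Nat.card (level Ttilde n) : ℝ)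
      ≤ (((n+1) * ((n+1) * 3 ^ K) : ℕ) : ℝ) := by exact_mod_cast hcard
    _ = ((n:ℝ) + 1) * (((n:ℝ) + 1) * (3:ℝ) ^ K) := by push_cast; ring
    _ ≤ ((3:ℝ) ^ S) ^ 2 * (((3:ℝ) ^ S) ^ 2 * (3:ℝ) ^ (4 * S)) := by
        gcongr
    _ = (3:ℝ) ^ (8 * S) := hfinal
end

section
/- Let T be an infinite tree that is the directed cover of a finite directed graph G based at a vertex x₀, such that in every strongly connected component of G each vertex has exactly one outgoing edge within its component (equivalently, every strongly connected component is a single directed cycle or a vertex with a self-loop). Then there exists an integer d ≥ 1 such that |B(n)| = Θ(n^d), where B(n) is the ball of radius n in T around its root; moreover d equals the maximum number of strongly connected components visited by a self-avoiding directed path in G starting at x₀. -/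
open Filter ENNReal

namespace TreeNotions

/-- The directed cover of a finite directed graph `G` based at `x₀`: vertices are
directed paths from `x₀` (recorded as the list of vertices after `x₀`). -/
def cover {V : Type} (G : V → V → Prop) (x₀ : V) : Set (List V) := {l | List.Chain G x₀ l}

/-- The strongly connected component of `v`. -/
def sccOf {V : Type} (G : V → V → Prop) (v : V) : Set V :=
  {w | Relation.ReflTransGen G v w ∧ Relation.ReflTransGen G w v}

/-- The strongly connected components visited by the path `x₀ :: l` (only vertices lying
on a directed cycle belong to a component). -/
def visitedSCCs {V : Type} (G : V → V → Prop) (x₀ : V) (l : List V) : Set (Set V) :=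
  {s | ∃ v ∈ x₀ :: l, Relation.TransGen G v v ∧ s = sccOf G v}

/-- The maximal number of strongly connected components visited by a self-avoiding
directed path starting at `x₀`. -/
noncomputable def maxSCCCount {V : Type} (G : V → V → Prop) (x₀ : V) : ℕ :=
  sSup {k | ∃ l : List V, List.Chain G x₀ l ∧ (x₀ :: l).Nodup ∧
    Nat.card (visitedSCCs G x₀ l) = k}


section DirectedCoverAux

open Relation List

variable {V : Type} {G : V → V → Prop}

lemma chain_reach {a x : V} {l : List V} (h : List.Chain G a l) (hx : x ∈ l) :
    ReflTransGen G a x := by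
  induction l generalizing a with
  | nil => cases hx
  | cons b l ih =>
    rw [List.Chain, List.chain_cons] at h
    rcases List.mem_cons.mp hx with rfl | hx
    · exact ReflTransGen.single h.1
    · exact (ReflTransGen.single h.1).trans (ih h.2 hx)

lemma chain_reach_getLast {a : V} {l : List V} (h : List.Chain G a l) :
    ∀ x ∈ a :: l, ReflTransGen G x ((a :: l).getLast (List.cons_ne_nil a l)) := by
  induction l generalizing a with
  | nil =>
    intro x hx
    rcases List.mem_singleton.mp hx with rfl
    exact ReflTransGen.refl
  | cons b l ih =>
    intro x hx
    rw [List.Chain, List.chain_cons] at h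
    rw [List.getLast_cons (List.cons_ne_nil b l)]
    rcases List.mem_cons.mp hx with rfl | hx
    · exact (ReflTransGen.single h.1).trans (ih h.2 b (List.mem_cons_self))
    · exact ih h.2 x hx

lemma chain_append_last {a b : V} {l₁ l₂ : List V} (h₁ : List.Chain G a l₁)
    (h : (a :: l₁).getLast (List.cons_ne_nil a l₁) = b) (h₂ : List.Chain G b l₂) :
    List.Chain G a (l₁ ++ l₂) := by
  induction l₁ generalizing a with
  | nil =>
    have hab : a = b := h
    subst hab
    simpa using h₂
  | cons c l₁ ih =>
    rw [List.Chain, List.chain_cons] at h₁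
    rw [List.getLast_cons (List.cons_ne_nil c l₁)] at h
    exact List.chain_cons.mpr ⟨h₁.1, ih h₁.2 h⟩

lemma exists_nodup_chain_aux : ∀ (l : List V) (a : V), List.Chain G a l →
    ∃ l', List.Chain G a l' ∧
      (a :: l').getLast (List.cons_ne_nil a l') = (a :: l).getLast (List.cons_ne_nil a l) ∧
      (a :: l').Nodup ∧ ∀ x ∈ l', x ∈ l := by
  intro l
  induction l with
  | nil => intro a _; exact ⟨[], List.Chain.nil, rfl, by simp, by simp⟩
  | cons w l ih =>
    intro a h
    rw [List.Chain, List.chain_cons] at h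
    obtain ⟨p, hp1, hp2, hp3, hp4⟩ := ih w h.2
    rw [List.getLast_cons (List.cons_ne_nil w l)]
    by_cases ha : a ∈ w :: p
    · obtain ⟨s, t, hst⟩ := List.append_of_mem ha
      have hsuf : (a :: t) <:+ (w :: p) := hst ▸ List.suffix_append s (a :: t)
      have hp1' : List.Chain' G (w :: p) := hp1
      have hchain' : List.Chain' G (a :: t) := hp1'.suffix hsuf
      refine ⟨t, hchain', ?_, hp3.sublist hsuf.sublist, ?_⟩
      · rw [← hp2]
        rw [List.getLast_congr _ (by simp) hst]
        exact (List.getLast_append_right (l := s) (List.cons_ne_nil a t)).symm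
      · intro x hx
        have : x ∈ w :: p := hsuf.subset (List.mem_cons_of_mem a hx)
        rcases List.mem_cons.mp this with rfl | hx'
        · exact List.mem_cons_self
        · exact List.mem_cons_of_mem w (hp4 x hx')
    · refine ⟨w :: p, List.chain_cons.mpr ⟨h.1, hp1⟩, ?_, List.nodup_cons.mpr ⟨ha, hp3⟩, ?_⟩
      · rw [List.getLast_cons (List.cons_ne_nil w p), hp2]
      · intro x hx
        rcases List.mem_cons.mp hx with rfl | hx'
        · exact List.mem_cons_self
        · exact List.mem_cons_of_mem w (hp4 x hx')

lemma exists_nodup_chain {a b : V} (h : ReflTransGen G a b) :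
    ∃ l, List.Chain G a l ∧ (a :: l).getLast (List.cons_ne_nil a l) = b ∧ (a :: l).Nodup ∧
      ∀ x ∈ a :: l, ReflTransGen G a x ∧ ReflTransGen G x b := by
  obtain ⟨l0, hc, hl⟩ := List.exists_isChain_cons_of_relationReflTransGen h
  obtain ⟨l', h1, h2, h3, _⟩ := exists_nodup_chain_aux l0 a hc
  refine ⟨l', h1, h2.trans hl, h3, fun x hx => ⟨?_, ?_⟩⟩
  · rcases List.mem_cons.mp hx with rfl | hx'
    · exact ReflTransGen.refl
    · exact chain_reach h1 hx'
  · exact (h2.trans hl) ▸ chain_reach_getLast h1 x hx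

lemma cyc_of_not_nodup {a : V} {l : List V} (h : List.Chain G a l)
    (hn : ¬ (a :: l).Nodup) : ∃ x, ReflTransGen G a x ∧ TransGen G x x := by
  induction l generalizing a with
  | nil => simp at hn
  | cons w l ih =>
    rw [List.Chain, List.chain_cons] at h
    by_cases ha : a ∈ w :: l
    · have : ReflTransGen G w a := by
        rcases List.mem_cons.mp ha with rfl | ha'
        · exact ReflTransGen.refl
        · exact chain_reach h.2 ha'
      exact ⟨a, ReflTransGen.refl, TransGen.trans_left (TransGen.single h.1) this⟩
    · have hn' : ¬ (w :: l).Nodup := fun hnd => hn (List.nodup_cons.mpr ⟨ha, hnd⟩)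
      obtain ⟨x, hx1, hx2⟩ := ih h.2 hn'
      exact ⟨x, (ReflTransGen.single h.1).trans hx1, hx2⟩


open scoped Classical in
noncomputable def sNext (G : V → V → Prop) (v : V) : V :=
  if h : ∃ w, G v w ∧ ReflTransGen G w v then h.choose else v

noncomputable def fpath (G : V → V → Prop) : V → ℕ → List V
  | _, 0 => []
  | v, t + 1 => sNext G v :: fpath G (sNext G v) t

lemma sNext_spec {v : V} (hv : TransGen G v v) :
    G v (sNext G v) ∧ ReflTransGen G (sNext G v) v := by
  have h : ∃ w, G v w ∧ ReflTransGen G w v := by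
    obtain ⟨b, hb1, hb2⟩ := (Relation.TransGen.head'_iff).mp hv
    exact ⟨b, hb1, hb2⟩
  rw [sNext]
  rw [dif_pos h]
  exact h.choose_spec

lemma sNext_eq (h_scc : ∀ v w w' : V, G v w → Relation.ReflTransGen G w v →
      G v w' → Relation.ReflTransGen G w' v → w = w')
    {v w : V} (hv : TransGen G v v) (h : G v w) (h' : ReflTransGen G w v) :
    w = sNext G v :=
  h_scc v w (sNext G v) h h' (sNext_spec hv).1 (sNext_spec hv).2

lemma sNext_cyc {v : V} (hv : TransGen G v v) : TransGen G (sNext G v) (sNext G v) :=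
  TransGen.trans_right (sNext_spec hv).2 (TransGen.single (sNext_spec hv).1)

lemma iter_cyc {v : V} (hv : TransGen G v v) :
    ∀ t, TransGen G ((sNext G)^[t] v) ((sNext G)^[t] v) ∧
      ReflTransGen G v ((sNext G)^[t] v) ∧ ReflTransGen G ((sNext G)^[t] v) v := by
  intro t
  induction t with
  | zero => exact ⟨hv, ReflTransGen.refl, ReflTransGen.refl⟩
  | succ t ih =>
    rw [Function.iterate_succ_apply']
    obtain ⟨h1, h2, h3⟩ := ih
    exact ⟨sNext_cyc h1, h2.trans (ReflTransGen.single (sNext_spec h1).1),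
      (sNext_spec h1).2.trans h3⟩

@[simp] lemma fpath_length (v : V) (t : ℕ) : (fpath G v t).length = t := by
  induction t generalizing v with
  | zero => rfl
  | succ t ih => simp [fpath, ih]

lemma fpath_chain {v : V} (hv : TransGen G v v) (t : ℕ) : List.Chain G v (fpath G v t) := by
  induction t generalizing v with
  | zero => exact List.Chain.nil
  | succ t ih =>
    exact List.chain_cons.mpr ⟨(sNext_spec hv).1, ih (sNext_cyc hv)⟩

lemma fpath_getLast (v : V) (t : ℕ) :
    (v :: fpath G v t).getLast (List.cons_ne_nil _ _) = (sNext G)^[t] v := by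
  induction t generalizing v with
  | zero => rfl
  | succ t ih =>
    rw [Function.iterate_succ_apply]
    show (v :: sNext G v :: fpath G (sNext G v) t).getLast _ = _
    rw [List.getLast_cons (List.cons_ne_nil _ _)]
    exact ih (sNext G v)

lemma chain_decomp (h_scc : ∀ v w w' : V, G v w → Relation.ReflTransGen G w v →
      G v w' → Relation.ReflTransGen G w' v → w = w')
    {v : V} (hv : TransGen G v v) {l : List V} (h : List.Chain G v l) :
    l = fpath G v l.length ∨
    ∃ t w rest, l = fpath G v t ++ w :: rest ∧ G ((sNext G)^[t] v) w ∧
      ¬ ReflTransGen G w ((sNext G)^[t] v) ∧ List.Chain G w rest ∧ t + rest.length < l.length + 1 := by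
  induction l generalizing v with
  | nil => exact Or.inl rfl
  | cons w l ih =>
    rw [List.Chain, List.chain_cons] at h
    by_cases hw : ReflTransGen G w v
    · have hwv : w = sNext G v := sNext_eq h_scc hv h.1 hw
      subst hwv
      rcases ih (sNext_cyc hv) h.2 with h' | ⟨t, w', rest, h1, h2, h3, h4, h5⟩
      · left
        show _ = fpath G v (l.length + 1)
        rw [fpath]
        rw [← h']
      · right
        refine ⟨t + 1, w', rest, ?_, ?_, ?_, h4, ?_⟩
        · rw [fpath, h1]; rfl
        · rwa [Function.iterate_succ_apply]
        · rwa [Function.iterate_succ_apply]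
        · simp only [List.length_cons]; omega
    · exact Or.inr ⟨0, w, l, rfl, h.1, hw, h.2, by simp only [List.length_cons]; omega⟩


section DCF
variable [Fintype V]

lemma mccSet_bddAbove (v : V) : BddAbove {k | ∃ l : List V, List.Chain G v l ∧ (v :: l).Nodup ∧
    Nat.card (visitedSCCs G v l) = k} := by
  refine ⟨Nat.card (Set V), fun k hk => ?_⟩
  obtain ⟨l, _, _, hcard⟩ := hk
  rw [← hcard]
  exact Nat.card_le_card_of_injective (Subtype.val : (visitedSCCs G v l) → Set V)
    Subtype.val_injective

lemma mccSet_nonempty (v : V) : {k | ∃ l : List V, List.Chain G v l ∧ (v :: l).Nodup ∧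
    Nat.card (visitedSCCs G v l) = k}.Nonempty :=
  ⟨_, [], List.Chain.nil, by simp, rfl⟩

lemma mcc_spec (v : V) : ∃ l : List V, List.Chain G v l ∧ (v :: l).Nodup ∧
    Nat.card (visitedSCCs G v l) = maxSCCCount G v :=
  Nat.sSup_mem (mccSet_nonempty v) (mccSet_bddAbove v)

lemma le_mcc {v : V} {l : List V} (h1 : List.Chain G v l) (h2 : (v :: l).Nodup) :
    Nat.card (visitedSCCs G v l) ≤ maxSCCCount G v :=
  le_csSup (mccSet_bddAbove v) ⟨l, h1, h2, rfl⟩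

lemma mcc_pos_of_cyc {v : V} (hv : TransGen G v v) : 1 ≤ maxSCCCount G v := by
  refine le_trans ?_ (le_mcc (l := []) List.Chain.nil (by simp))
  have : Nonempty (visitedSCCs G v ([] : List V)) :=
    ⟨⟨sccOf G v, ⟨v, by simp, hv, rfl⟩⟩⟩
  exact Nat.one_le_iff_ne_zero.mpr (Nat.card_pos).ne'

lemma sccOf_eq_of_mem {a b : V} (h1 : ReflTransGen G a b) (h2 : ReflTransGen G b a) :
    sccOf G a = sccOf G b := by
  ext x
  exact ⟨fun hx => ⟨h2.trans hx.1, hx.2.trans h1⟩, fun hx => ⟨h1.trans hx.1, hx.2.trans h2⟩⟩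

/-- From a non-cyclic vertex, a step cannot increase maxSCCCount. -/
lemma mcc_step_le {v w : V} (hv : ¬ TransGen G v v) (h : G v w) :
    maxSCCCount G w ≤ maxSCCCount G v := by
  obtain ⟨l, hl1, hl2, hl3⟩ := mcc_spec (G := G) w
  rw [← hl3]
  have hvnm : v ∉ w :: l := by
    intro hm
    refine hv ?_
    rcases List.mem_cons.mp hm with rfl | hm'
    · exact TransGen.single h
    · exact TransGen.trans_left (TransGen.single h) (chain_reach hl1 hm')
  have hchain : List.Chain G v (w :: l) := List.chain_cons.mpr ⟨h, hl1⟩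
  have hnodup : (v :: w :: l).Nodup := List.nodup_cons.mpr ⟨hvnm, hl2⟩
  refine le_trans ?_ (le_mcc hchain hnodup)
  rw [Nat.card_coe_set_eq, Nat.card_coe_set_eq]
  refine Set.ncard_le_ncard ?_ (Set.toFinite _)
  rintro s ⟨x, hx, hcyc, rfl⟩
  exact ⟨x, List.mem_cons_of_mem v hx, hcyc, rfl⟩

/-- Leaving the SCC of a cyclic vertex strictly decreases maxSCCCount. -/
lemma mcc_exit_lt {v u w : V} (hv : TransGen G v v) (hu1 : ReflTransGen G v u)
    (hu2 : ReflTransGen G u v) (h : G u w) (hw : ¬ ReflTransGen G w u) :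
    maxSCCCount G w + 1 ≤ maxSCCCount G v := by
  obtain ⟨l, hl1, hl2, hl3⟩ := mcc_spec (G := G) w
  obtain ⟨p, hp1, hp2, hp3, hp4⟩ := exists_nodup_chain hu1
  -- elements of v::p are in the SCC of v
  have hpscc : ∀ x ∈ v :: p, ReflTransGen G v x ∧ ReflTransGen G x v :=
    fun x hx => ⟨(hp4 x hx).1, (hp4 x hx).2.trans hu2⟩
  -- elements of w::l are not in the SCC of v
  have hlscc : ∀ x, x ∈ w :: l → ReflTransGen G x v → False := by
    intro x hx hxv
    have hwx : ReflTransGen G w x := by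
      rcases List.mem_cons.mp hx with rfl | hx'
      · exact ReflTransGen.refl
      · exact chain_reach hl1 hx'
    exact hw ((hwx.trans hxv).trans hu1)
  have hchain : List.Chain G v (p ++ w :: l) := by
    refine List.isChain_cons_split.mpr ⟨?_, hl1⟩
    exact chain_append_last hp1 hp2 (List.chain_cons.mpr ⟨h, List.Chain.nil⟩)
  have hnodup : (v :: (p ++ w :: l)).Nodup := by
    rw [show v :: (p ++ w :: l) = (v :: p) ++ (w :: l) by simp]
    refine List.Nodup.append hp3 hl2 ?_
    intro x hx1 hx2
    exact hlscc x hx2 (hpscc x hx1).2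
  refine le_trans ?_ (le_mcc hchain hnodup)
  rw [← hl3]
  have hsub : insert (sccOf G v) (visitedSCCs G w l) ⊆ visitedSCCs G v (p ++ w :: l) := by
    rintro s (rfl | ⟨x, hx, hcyc, rfl⟩)
    · exact ⟨v, List.mem_cons_self, hv, rfl⟩
    · exact ⟨x, by simp [List.mem_cons.mp hx], hcyc, rfl⟩
  have hnm : sccOf G v ∉ visitedSCCs G w l := by
    rintro ⟨x, hx, hcyc, hxscc⟩
    have hxv : x ∈ sccOf G v := hxscc ▸ ⟨ReflTransGen.refl, ReflTransGen.refl⟩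
    exact hlscc x hx hxv.2
  calc Nat.card (visitedSCCs G w l) + 1
      = Set.ncard (insert (sccOf G v) (visitedSCCs G w l)) := by
        rw [Nat.card_coe_set_eq, Set.ncard_insert_of_notMem hnm (Set.toFinite _)]
    _ ≤ Set.ncard (visitedSCCs G v (p ++ w :: l)) := Set.ncard_le_ncard hsub (Set.toFinite _)
    _ = Nat.card (visitedSCCs G v (p ++ w :: l)) := (Nat.card_coe_set_eq _).symm



end DCF

instance optionFinite {X : Type} [Finite X] : Finite (Option X) :=
  Finite.of_equiv _ (Equiv.optionEquivSumPUnit.{0,0} X).symm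



-- helpers
lemma getLast_cons_append {a : V} {l₁ l₂ : List V}
    (h1 : (a :: l₁).getLast (List.cons_ne_nil _ _) = a)
    (h2 : (a :: l₂).getLast (List.cons_ne_nil _ _) = a) :
    (a :: (l₁ ++ l₂)).getLast (List.cons_ne_nil _ _) = a := by
  cases l₂ with
  | nil => simpa using h1
  | cons b t =>
    rw [List.getLast_congr _ (by simp) (show a :: (l₁ ++ b :: t) = (a :: l₁) ++ (b :: t) by simp)]
    rw [List.getLast_append_right (List.cons_ne_nil _ _)]
    rw [List.getLast_cons (List.cons_ne_nil _ _)] at h2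
    exact h2

lemma loop_pow {u : V} {c : List V} (h1 : List.Chain G u c)
    (h2 : (u :: c).getLast (List.cons_ne_nil _ _) = u) (j : ℕ) :
    List.Chain G u ((List.replicate j c).flatten) ∧
      (u :: (List.replicate j c).flatten).getLast (List.cons_ne_nil _ _) = u := by
  induction j with
  | zero => exact ⟨List.Chain.nil, rfl⟩
  | succ j ih =>
    rw [List.replicate_succ, List.flatten_cons]
    exact ⟨chain_append_last h1 h2 ih.1, getLast_cons_append h2 ih.2⟩

lemma length_flatten_replicate (j : ℕ) (c : List V) :
    ((List.replicate j c).flatten).length = j * c.length := by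
  induction j with
  | zero => simp
  | succ j ih => simp [List.replicate_succ, ih, Nat.succ_mul, Nat.add_comm]

lemma count_flatten_replicate [DecidableEq V] (x : V) (j : ℕ) (c : List V) :
    List.count x ((List.replicate j c).flatten) = j * List.count x c := by
  induction j with
  | zero => simp
  | succ j ih => simp [List.replicate_succ, List.count_append, ih, Nat.succ_mul, Nat.add_comm]

lemma chain_flatMap {ψ : V → List V}
    (hψ : ∀ u, List.Chain G u (ψ u) ∧ (u :: ψ u).getLast (List.cons_ne_nil _ _) = u) :
    ∀ (l : List V) (a : V), List.Chain G a l →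
      List.Chain G a (ψ a ++ l.flatMap (fun u => u :: ψ u)) := by
  intro l
  induction l with
  | nil => intro a _; simpa using (hψ a).1
  | cons b l ih =>
    intro a h
    rw [List.Chain, List.chain_cons] at h
    rw [List.flatMap_cons]
    have heq : ψ a ++ ((b :: ψ b) ++ List.flatMap (fun u => u :: ψ u) l)
        = ψ a ++ (b :: (ψ b ++ List.flatMap (fun u => u :: ψ u) l)) := by simp
    rw [heq]
    refine List.isChain_cons_split.mpr ⟨?_, ih b h.2⟩
    exact chain_append_last (hψ a).1 (hψ a).2 (List.chain_cons.mpr ⟨h.1, List.Chain.nil⟩)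

lemma length_flatMap_le {ψ : V → List V} {B : ℕ} (hB : ∀ u, (ψ u).length ≤ B) :
    ∀ L : List V, (L.flatMap (fun u => u :: ψ u)).length ≤ L.length * (1 + B) := by
  intro L
  induction L with
  | nil => simp
  | cons u L ih =>
    rw [List.flatMap_cons, List.length_append]
    simp only [List.length_cons]
    have h1 : (u :: ψ u).length ≤ 1 + B := by
      simp only [List.length_cons]
      have := hB u
      omega
    calc (u :: ψ u).length + (L.flatMap (fun u => u :: ψ u)).length
        ≤ (1 + B) + L.length * (1 + B) := Nat.add_le_add h1 ih
      _ = (L.length + 1) * (1 + B) := by ring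

lemma count_flatMap_eq [DecidableEq V] {ψ : V → List V} {t : V} {val : ℕ}
    (hval : ∀ u, List.count t (ψ u) = if u = t then val else 0) :
    ∀ L : List V, List.count t (L.flatMap (fun u => u :: ψ u)) = List.count t L * (1 + val) := by
  intro L
  induction L with
  | nil => simp
  | cons u L ih =>
    rw [List.flatMap_cons, List.count_append, List.count_cons, List.count_cons, ih, hval u]
    by_cases h : u = t
    · subst h; simp; ring
    · simp [h, Ne.symm h, fun hh : t = u => h hh.symm]



section DCF2
variable [Fintype V]

def dcPaths (G : V → V → Prop) (v : V) (n : ℕ) : Set (List V) :=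
  {l | List.Chain G v l ∧ l.length ≤ n}

lemma dcPaths_finite (v : V) (n : ℕ) : (dcPaths G v n).Finite :=
  Set.Finite.subset (List.finite_length_le V n) (fun l hl => hl.2)

noncomputable def dcMeasure (G : V → V → Prop) [Fintype V] (v : V) : ℕ :=
  maxSCCCount G v * (Fintype.card V + 1) + ({x | ReflTransGen G v x} : Set V).ncard

lemma upper_bound (h_scc : ∀ v w w' : V, G v w → Relation.ReflTransGen G w v →
      G v w' → Relation.ReflTransGen G w' v → w = w') :
    ∀ (N : ℕ) (v : V), dcMeasure G v ≤ N →
      ∃ C : ℕ, 0 < C ∧ ∀ n, Nat.card (dcPaths G v n) ≤ C * (n + 1) ^ (maxSCCCount G v) := by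
  classical
  intro N
  induction N using Nat.strong_induction_on with
  | _ N ih =>
  intro v hN
  by_cases hcyc : TransGen G v v
  · -- cyclic vertex
    have hev : 1 ≤ maxSCCCount G v := mcc_pos_of_cyc hcyc
    set Ex : Set V := {w | ∃ u, ReflTransGen G v u ∧ ReflTransGen G u v ∧ G u w ∧
      ¬ ReflTransGen G w u} with hExdef
    have hExlt : ∀ w ∈ Ex, maxSCCCount G w + 1 ≤ maxSCCCount G v := by
      rintro w ⟨u, h1, h2, h3, h4⟩
      exact mcc_exit_lt hcyc h1 h2 h3 h4
    have hmeas : ∀ w ∈ Ex, dcMeasure G w < dcMeasure G v := by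
      intro w hw
      have h1 := hExlt w hw
      have h2 : ({x | ReflTransGen G w x} : Set V).ncard ≤ Fintype.card V := by
        refine le_trans (Set.ncard_le_ncard (Set.subset_univ _) (Set.toFinite _)) ?_
        simp [Set.ncard_univ, Nat.card_eq_fintype_card]
      unfold dcMeasure
      nlinarith [Nat.zero_le (({x | ReflTransGen G v x} : Set V).ncard)]
    have hC : ∀ w : V, ∃ C : ℕ, 0 < C ∧ (w ∈ Ex → ∀ n,
        Nat.card (dcPaths G w n) ≤ C * (n + 1) ^ (maxSCCCount G w)) := by
      intro w
      by_cases hw : w ∈ Ex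
      · obtain ⟨C, hC0, hCb⟩ := ih (dcMeasure G w) (lt_of_lt_of_le (hmeas w hw) hN) w le_rfl
        exact ⟨C, hC0, fun _ => hCb⟩
      · exact ⟨1, one_pos, fun h' => absurd h' hw⟩
    choose f hf0 hfb using hC
    refine ⟨1 + ∑ w : V, f w, by positivity, ?_⟩
    intro n
    -- encode each path
    haveI : ∀ (w : V) (m : ℕ), Finite (dcPaths G w m) := fun w m => (dcPaths_finite w m).to_subtype
    set T := (Fin (n+1)) ⊕ ((Fin (n+1)) × ((w : ↥Ex) × ↥(dcPaths G w.val n))) with hTdef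
    have key : ∀ x : ↥(dcPaths G v n), ∃ y : T,
        Sum.elim (fun t : Fin (n+1) => fpath G v t.val)
          (fun q : (Fin (n+1)) × ((w : ↥Ex) × ↥(dcPaths G w.val n)) =>
            fpath G v q.1.val ++ q.2.1.val :: q.2.2.val) y = x.val := by
      rintro ⟨l, hchain, hlen⟩
      rcases chain_decomp h_scc hcyc hchain with h' | ⟨t, w, rest, h1, h2, h3, h4, h5⟩
      · exact ⟨Sum.inl ⟨l.length, by omega⟩, h'.symm⟩
      · have hlt : t ≤ n ∧ rest.length ≤ n := by
          have := h1 ▸ hlen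
          simp only [List.length_append, List.length_cons, fpath_length] at this ⊢
          omega
        refine ⟨Sum.inr ⟨⟨t, by omega⟩, ⟨⟨w, ?_⟩, ⟨rest, h4, hlt.2⟩⟩⟩, h1.symm⟩
        exact ⟨(sNext G)^[t] v, (iter_cyc hcyc t).2.1, (iter_cyc hcyc t).2.2, h2, h3⟩
    have hcard : Nat.card (dcPaths G v n) ≤ Nat.card T := by
      have hinj : Function.Injective (fun x : ↥(dcPaths G v n) => (key x).choose) := by
        intro a b hab
        apply Subtype.ext
        rw [← (key a).choose_spec, ← (key b).choose_spec]
        exact congrArg _ hab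
      haveI : Finite T := by unfold T; infer_instance
      exact Nat.card_le_card_of_injective _ hinj
    haveI : Fintype ↥Ex := Fintype.ofFinite _
    haveI : ∀ (w : V) (m : ℕ), Fintype (dcPaths G w m) := fun w m => Fintype.ofFinite _
    have hTcard : Nat.card T = (n+1) + (n+1) * ∑ w : ↥Ex, Nat.card (dcPaths G w.val n) := by
      rw [hTdef]
      rw [Nat.card_eq_fintype_card]
      rw [Fintype.card_sum, Fintype.card_prod, Fintype.card_sigma, Fintype.card_fin]
      simp [Nat.card_eq_fintype_card]
    have hbound : ∑ w : ↥Ex, Nat.card (dcPaths G w.val n)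
        ≤ (∑ w : V, f w) * (n+1) ^ (maxSCCCount G v - 1) := by
      calc ∑ w : ↥Ex, Nat.card (dcPaths G w.val n)
          ≤ ∑ w : ↥Ex, f w.val * (n+1) ^ (maxSCCCount G v - 1) := by
            refine Finset.sum_le_sum (fun w _ => ?_)
            refine le_trans (hfb w.val w.2 n) ?_
            refine Nat.mul_le_mul_left _ (Nat.pow_le_pow_right (by omega) ?_)
            have := hExlt w.val w.2
            omega
        _ = (∑ w : ↥Ex, f w.val) * (n+1) ^ (maxSCCCount G v - 1) := by
            rw [Finset.sum_mul]
        _ ≤ (∑ w : V, f w) * (n+1) ^ (maxSCCCount G v - 1) := by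
            refine Nat.mul_le_mul_right _ ?_
            rw [← Finset.sum_subtype (Finset.univ.filter (· ∈ Ex)) (by simp) f]
            exact Finset.sum_le_sum_of_subset (Finset.filter_subset _ _)
    calc Nat.card (dcPaths G v n) ≤ Nat.card T := hcard
      _ = (n+1) + (n+1) * ∑ w : ↥Ex, Nat.card (dcPaths G w.val n) := hTcard
      _ ≤ (n+1) + (n+1) * ((∑ w : V, f w) * (n+1) ^ (maxSCCCount G v - 1)) := by
          exact Nat.add_le_add_left (Nat.mul_le_mul_left _ hbound) _
      _ ≤ (1 + ∑ w : V, f w) * (n + 1) ^ maxSCCCount G v := by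
          have hpow : (n+1) * (n+1) ^ (maxSCCCount G v - 1) = (n+1) ^ maxSCCCount G v := by
            rw [← pow_succ']
            congr 1
            omega
          have hle : (n+1) ≤ (n+1) ^ maxSCCCount G v :=
            Nat.le_self_pow (by omega) _
          calc (n+1) + (n+1) * ((∑ w : V, f w) * (n+1) ^ (maxSCCCount G v - 1))
              = (n+1) + (∑ w : V, f w) * ((n+1) * (n+1) ^ (maxSCCCount G v - 1)) := by ring
            _ = (n+1) + (∑ w : V, f w) * (n+1) ^ maxSCCCount G v := by rw [hpow]
            _ ≤ (n+1) ^ maxSCCCount G v + (∑ w : V, f w) * (n+1) ^ maxSCCCount G v :=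
                Nat.add_le_add_right hle _
            _ = (1 + ∑ w : V, f w) * (n + 1) ^ maxSCCCount G v := by ring
  · -- non-cyclic vertex
    have hmeas : ∀ w : V, G v w → dcMeasure G w < dcMeasure G v := by
      intro w hw
      have h1 : maxSCCCount G w ≤ maxSCCCount G v := mcc_step_le hcyc hw
      have h2 : ({x | ReflTransGen G w x} : Set V).ncard <
          ({x | ReflTransGen G v x} : Set V).ncard := by
        refine Set.ncard_lt_ncard ?_ (Set.toFinite _)
        constructor
        · exact fun x hx => (ReflTransGen.single hw).trans hx
        · intro hsup
          have : ReflTransGen G w v := hsup (ReflTransGen.refl)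
          exact hcyc (TransGen.trans_left (TransGen.single hw) this)
      unfold dcMeasure
      nlinarith
    have hC : ∀ w : V, ∃ C : ℕ, 0 < C ∧ (G v w → ∀ n,
        Nat.card (dcPaths G w n) ≤ C * (n + 1) ^ (maxSCCCount G w)) := by
      intro w
      by_cases hw : G v w
      · obtain ⟨C, hC0, hCb⟩ := ih (dcMeasure G w) (lt_of_lt_of_le (hmeas w hw) hN) w le_rfl
        exact ⟨C, hC0, fun _ => hCb⟩
      · exact ⟨1, one_pos, fun h' => absurd h' hw⟩
    choose f hf0 hfb using hC
    refine ⟨1 + ∑ w : V, f w, by positivity, ?_⟩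
    intro n
    haveI : ∀ (w : V) (m : ℕ), Finite (dcPaths G w m) := fun w m => (dcPaths_finite w m).to_subtype
    match n with
    | 0 =>
      have hset : dcPaths G v 0 = {([] : List V)} := by
        ext l
        constructor
        · rintro ⟨_, hlen⟩
          simpa using List.length_eq_zero_iff.mp (Nat.le_zero.mp hlen)
        · rintro rfl
          exact ⟨List.Chain.nil, by simp⟩
      rw [hset]
      have : Nat.card ({([] : List V)} : Set (List V)) = 1 := by
        rw [Nat.card_coe_set_eq, Set.ncard_singleton]
      rw [this]
      have : 1 ≤ 1 + ∑ w : V, f w := by omega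
      simpa using this
    | (m+1) =>
      set T := Option ((w : {w : V // G v w}) × ↥(dcPaths G w.val m)) with hTdef
      have key : ∀ x : ↥(dcPaths G v (m+1)), ∃ y : T,
          (Option.elim y [] (fun q => q.1.val :: q.2.val)) = x.val := by
        rintro ⟨l, hchain, hlen⟩
        match l, hchain, hlen with
        | [], _, _ => exact ⟨none, rfl⟩
        | (w :: rest), hchain, hlen =>
          rw [List.Chain, List.chain_cons] at hchain
          exact ⟨some ⟨⟨w, hchain.1⟩, ⟨rest, hchain.2, by simpa using hlen⟩⟩, rfl⟩
      have hcard : Nat.card (dcPaths G v (m+1)) ≤ Nat.card T := by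
        have hinj : Function.Injective (fun x : ↥(dcPaths G v (m+1)) => (key x).choose) := by
          intro a b hab
          apply Subtype.ext
          rw [← (key a).choose_spec, ← (key b).choose_spec]
          exact congrArg (fun y : T => Option.elim y ([] : List V)
            (fun q => q.1.val :: q.2.val)) hab
        haveI : Finite T := by unfold T; infer_instance
        exact Nat.card_le_card_of_injective _ hinj
      haveI : ∀ (w : V) (k : ℕ), Fintype (dcPaths G w k) := fun w k => Fintype.ofFinite _
      have hTcard : Nat.card T = (∑ w : {w : V // G v w}, Nat.card (dcPaths G w.val m)) + 1 := by
        rw [hTdef, Nat.card_eq_fintype_card, Fintype.card_option, Fintype.card_sigma]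
        simp [Nat.card_eq_fintype_card]
      have hbound : ∑ w : {w : V // G v w}, Nat.card (dcPaths G w.val m)
          ≤ (∑ w : V, f w) * (m + 2) ^ (maxSCCCount G v) := by
        calc ∑ w : {w : V // G v w}, Nat.card (dcPaths G w.val m)
            ≤ ∑ w : {w : V // G v w}, f w.val * (m + 2) ^ (maxSCCCount G v) := by
              refine Finset.sum_le_sum (fun w _ => ?_)
              refine le_trans (hfb w.val w.2 m) ?_
              refine Nat.mul_le_mul_left _ ?_
              calc (m+1) ^ maxSCCCount G w ≤ (m+2) ^ maxSCCCount G w :=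
                    Nat.pow_le_pow_left (by omega) _
                _ ≤ (m+2) ^ maxSCCCount G v :=
                    Nat.pow_le_pow_right (by omega) (mcc_step_le hcyc w.2)
          _ = (∑ w : {w : V // G v w}, f w.val) * (m + 2) ^ (maxSCCCount G v) := by
              rw [Finset.sum_mul]
          _ ≤ (∑ w : V, f w) * (m + 2) ^ (maxSCCCount G v) := by
              refine Nat.mul_le_mul_right _ ?_
              rw [← Finset.sum_subtype (Finset.univ.filter (fun w => G v w)) (by simp) f]
              exact Finset.sum_le_sum_of_subset (Finset.filter_subset _ _)
      calc Nat.card (dcPaths G v (m+1)) ≤ Nat.card T := hcard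
        _ = (∑ w : {w : V // G v w}, Nat.card (dcPaths G w.val m)) + 1 := hTcard
        _ ≤ (∑ w : V, f w) * (m + 2) ^ (maxSCCCount G v) + 1 := Nat.add_le_add_right hbound _
        _ ≤ (1 + ∑ w : V, f w) * (m + 1 + 1) ^ maxSCCCount G v := by
            have h1 : 1 ≤ (m+2) ^ (maxSCCCount G v) := Nat.one_le_pow _ _ (by omega)
            calc (∑ w : V, f w) * (m + 2) ^ (maxSCCCount G v) + 1
                ≤ (∑ w : V, f w) * (m + 2) ^ (maxSCCCount G v) + (m+2) ^ (maxSCCCount G v) := by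
                  omega
              _ = (1 + ∑ w : V, f w) * (m + 1 + 1) ^ maxSCCCount G v := by ring


lemma lower_bound [Fintype V] (x₀ : V) :
    ∃ C : ℕ, 0 < C ∧ ∀ n, C ≤ n →
      (n / C + 1) ^ (maxSCCCount G x₀) ≤ Nat.card (dcPaths G x₀ n) := by
  classical
  obtain ⟨l₀, hl1, hl2, hl3⟩ := mcc_spec (G := G) x₀
  set S := visitedSCCs G x₀ l₀ with hSdef
  haveI : Finite ↥S := Subtype.finite
  haveI : Fintype ↥S := Fintype.ofFinite _
  have hrep : ∀ σ : ↥S, ∃ x, x ∈ x₀ :: l₀ ∧ TransGen G x x ∧ σ.val = sccOf G x :=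
    fun σ => σ.2
  choose g hg1 hg2 hg3 using hrep
  have hginj : Function.Injective g := by
    intro σ τ h
    apply Subtype.ext
    rw [hg3 σ, hg3 τ, h]
  have hloop : ∀ σ : ↥S, ∃ c : List V, List.Chain G (g σ) c ∧ c ≠ [] ∧
      (g σ :: c).getLast (List.cons_ne_nil _ _) = g σ := by
    intro σ
    obtain ⟨b, hb1, hb2⟩ := (TransGen.head'_iff).mp (hg2 σ)
    obtain ⟨lw, hlw1, hlw2⟩ := List.exists_isChain_cons_of_relationReflTransGen hb2
    refine ⟨b :: lw, List.chain_cons.mpr ⟨hb1, hlw1⟩, List.cons_ne_nil _ _, ?_⟩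
    rw [List.getLast_cons (List.cons_ne_nil _ _)]
    exact hlw2
  choose c hc1 hc2 hc3 using hloop
  have hcscc : ∀ σ : ↥S, ∀ x ∈ c σ, ReflTransGen G (g σ) x ∧ ReflTransGen G x (g σ) := by
    intro σ x hx
    exact ⟨chain_reach (hc1 σ) hx,
      (hc3 σ) ▸ chain_reach_getLast (hc1 σ) x (List.mem_cons_of_mem _ hx)⟩
  have hcross : ∀ σ τ : ↥S, σ ≠ τ → g σ ∉ c τ := by
    intro σ τ hne hmem
    have h1 := hcscc τ (g σ) hmem
    have h2 : sccOf G (g τ) = sccOf G (g σ) := sccOf_eq_of_mem h1.1 h1.2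
    have h3 : σ.val = τ.val := by rw [hg3 σ, hg3 τ]; exact h2.symm
    exact hne (Subtype.ext h3)
  have hmem : ∀ σ : ↥S, g σ ∈ c σ := by
    intro σ
    have h := hc3 σ
    rw [List.getLast_cons (hc2 σ)] at h
    exact h ▸ List.getLast_mem (hc2 σ)
  set cnt : ↥S → ℕ := fun σ => List.count (g σ) (c σ) with hcnt
  have hcntpos : ∀ σ, 0 < cnt σ := fun σ => List.count_pos_iff.mpr (hmem σ)
  set Lsum : ℕ := ∑ σ : ↥S, (c σ).length with hLsum
  have hclen : ∀ σ : ↥S, (c σ).length ≤ Lsum := by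
    intro σ
    rw [hLsum]
    exact Finset.single_le_sum (f := fun τ : ↥S => (c τ).length)
      (fun i _ => Nat.zero_le _) (Finset.mem_univ σ)
  set C : ℕ := (l₀.length + 1) * (1 + Lsum) with hC
  have hCpos : 0 < C := by positivity
  refine ⟨C, hCpos, ?_⟩
  intro n hn
  set m := n / C with hm
  have hm1 : 1 ≤ m := (Nat.one_le_div_iff hCpos).mpr hn
  set ψ : (↥S → ℕ) → V → List V := fun k u =>
    if h : ∃ σ : ↥S, g σ = u then (List.replicate (k h.choose) (c h.choose)).flatten else []
    with hψdef
  have hloopAt : ∀ (τ : ↥S) (j : ℕ) (u : V), g τ = u → ∀ L : List V,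
      L = (List.replicate j (c τ)).flatten →
      List.Chain G u L ∧ (u :: L).getLast (List.cons_ne_nil _ _) = u := by
    intro τ j u hgu L hL
    subst hgu
    subst hL
    exact loop_pow (hc1 τ) (hc3 τ) j
  have hnilAt : ∀ (u : V) (L : List V), L = [] →
      List.Chain G u L ∧ (u :: L).getLast (List.cons_ne_nil _ _) = u := by
    rintro u L rfl
    exact ⟨List.Chain.nil, rfl⟩
  have hψ : ∀ k u, List.Chain G u (ψ k u) ∧
      (u :: ψ k u).getLast (List.cons_ne_nil _ _) = u := by
    intro k u
    by_cases h : ∃ σ : ↥S, g σ = u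
    · have hψu : ψ k u = (List.replicate (k h.choose) (c h.choose)).flatten := by
        simp only [hψdef]
        rw [dif_pos h]
      exact hloopAt h.choose (k h.choose) u h.choose_spec (ψ k u) hψu
    · have hψu : ψ k u = [] := by
        simp only [hψdef]
        rw [dif_neg h]
      exact hnilAt u (ψ k u) hψu
  have hψcount : ∀ (k : ↥S → ℕ) (σ : ↥S) (u : V),
      List.count (g σ) (ψ k u) = if u = g σ then k σ * cnt σ else 0 := by
    intro k σ u
    by_cases h : ∃ τ : ↥S, g τ = u
    · have hψu : ψ k u = (List.replicate (k h.choose) (c h.choose)).flatten := by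
        simp only [hψdef]
        rw [dif_pos h]
      rw [hψu, count_flatten_replicate]
      by_cases hu : u = g σ
      · have hτ : h.choose = σ := hginj (by rw [h.choose_spec, hu])
        rw [hτ, if_pos hu]
      · have hτ : σ ≠ h.choose := by
          intro hh
          exact hu (by rw [← h.choose_spec, ← hh])
        rw [if_neg hu, List.count_eq_zero.mpr (hcross σ h.choose hτ), Nat.mul_zero]
    · have hψu : ψ k u = [] := by
        simp only [hψdef]
        rw [dif_neg h]
      have hu : u ≠ g σ := fun hh => h ⟨σ, hh.symm⟩
      rw [hψu, if_neg hu]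
      simp
  have hψlen : ∀ (k : ↥S → ℕ), (∀ σ, k σ ≤ m) → ∀ u, (ψ k u).length ≤ m * Lsum := by
    intro k hk u
    by_cases h : ∃ τ : ↥S, g τ = u
    · have hψu : ψ k u = (List.replicate (k h.choose) (c h.choose)).flatten := by
        simp only [hψdef]
        rw [dif_pos h]
      rw [hψu, length_flatten_replicate]
      exact Nat.mul_le_mul (hk _) (hclen _)
    · have hψu : ψ k u = [] := by
        simp only [hψdef]
        rw [dif_neg h]
      rw [hψu]
      simp
  set P : (↥S → ℕ) → List V := fun k => ψ k x₀ ++ l₀.flatMap (fun u => u :: ψ k u) with hPdef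
  have hPchain : ∀ k, List.Chain G x₀ (P k) := fun k => chain_flatMap (hψ k) l₀ x₀ hl1
  have hPF : ∀ k, (x₀ :: l₀).flatMap (fun u => u :: ψ k u) = x₀ :: P k := by
    intro k
    simp [hPdef, List.flatMap_cons]
  have hPlen : ∀ k, (∀ σ, k σ ≤ m) → (P k).length ≤ n := by
    intro k hk
    have h1 : (P k).length + 1 = ((x₀ :: l₀).flatMap (fun u => u :: ψ k u)).length := by
      rw [hPF k]
      simp
    have h2 := length_flatMap_le (hψlen k hk) (x₀ :: l₀)
    have h3 : (x₀ :: l₀).length * (1 + m * Lsum) ≤ m * C := by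
      rw [hC]
      simp only [List.length_cons]
      have hstep : 1 + m * Lsum ≤ m * (1 + Lsum) := by nlinarith
      calc (l₀.length + 1) * (1 + m * Lsum)
          ≤ (l₀.length + 1) * (m * (1 + Lsum)) := Nat.mul_le_mul_left _ hstep
        _ = m * ((l₀.length + 1) * (1 + Lsum)) := by ring
    have h4 : m * C ≤ n := by
      rw [hm]
      exact Nat.div_mul_le_self n C
    omega
  have hcount : ∀ (k : ↥S → ℕ) (σ : ↥S),
      List.count (g σ) ((x₀ :: l₀).flatMap (fun u => u :: ψ k u))
        = 1 * (1 + k σ * cnt σ) := by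
    intro k σ
    rw [count_flatMap_eq (hψcount k σ) (x₀ :: l₀), List.count_eq_one_of_mem hl2 (hg1 σ)]
  have hinj : Function.Injective (fun k : ↥S → Fin (m+1) =>
      (⟨P (fun σ => (k σ).val), hPchain (fun σ => (k σ).val),
        hPlen (fun σ => (k σ).val) (fun σ => Nat.lt_succ_iff.mp (k σ).isLt)⟩ :
          ↥(dcPaths G x₀ n))) := by
    intro k k' hkk
    have hP : P (fun σ => (k σ).val) = P (fun σ => (k' σ).val) := congrArg Subtype.val hkk
    funext σ
    have h1 := hcount (fun σ => (k σ).val) σ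
    have h2 := hcount (fun σ => (k' σ).val) σ
    have hF : (x₀ :: l₀).flatMap (fun u => u :: ψ (fun σ => (k σ).val) u)
        = (x₀ :: l₀).flatMap (fun u => u :: ψ (fun σ => (k' σ).val) u) := by
      rw [hPF (fun σ => (k σ).val), hPF (fun σ => (k' σ).val), hP]
    rw [hF] at h1
    rw [h2] at h1
    have : (k' σ).val * cnt σ = (k σ).val * cnt σ := by omega
    exact (Fin.ext (Nat.eq_of_mul_eq_mul_right (hcntpos σ) this)).symm
  haveI : Finite ↥(dcPaths G x₀ n) := (dcPaths_finite x₀ n).to_subtype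
  have hcard := Nat.card_le_card_of_injective _ hinj
  rw [Nat.card_fun] at hcard
  have hfin : Nat.card (Fin (m+1)) = m + 1 := by simp
  rw [hfin, hl3] at hcard
  exact hcard


end DCF2

end DirectedCoverAux

/-- If in every strongly connected component of `G` each vertex has exactly one outgoing
edge within its component, then the directed cover has `|B(n)| = Θ(n^d)` with `d ≥ 1`
the maximal number of components visited by a self-avoiding path from `x₀`. -/
theorem directed_cover_polynomial_growth {V : Type} [Fintype V] (G : V → V → Prop)
    (x₀ : V) (h_inf : (cover G x₀).Infinite)
    (h_scc : ∀ v w w' : V, G v w → Relation.ReflTransGen G w v →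
      G v w' → Relation.ReflTransGen G w' v → w = w') :
    1 ≤ maxSCCCount G x₀ ∧
    ∃ c₁ c₂ : ℝ, 0 < c₁ ∧ 0 < c₂ ∧ ∀ n : ℕ, 1 ≤ n →
      c₁ * (n : ℝ) ^ (maxSCCCount G x₀) ≤ (Nat.card (ball (cover G x₀) n) : ℝ) ∧
      (Nat.card (ball (cover G x₀) n) : ℝ) ≤ c₂ * (n : ℝ) ^ (maxSCCCount G x₀) := by
  classical
  have hball : ∀ n : ℕ, ball (cover G x₀) n = dcPaths G x₀ n := fun n => rfl
  have hd1 : 1 ≤ maxSCCCount G x₀ := by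
    have hns : ¬ (cover G x₀ ⊆ {l : List V | l.length ≤ Fintype.card V}) := by
      intro hsub
      exact h_inf (Set.Finite.subset (List.finite_length_le V (Fintype.card V)) hsub)
    obtain ⟨l, hl, hlen⟩ := Set.not_subset.mp hns
    have hnodup : ¬ (x₀ :: l).Nodup := by
      intro hnd
      refine hlen ?_
      have := hnd.length_le_card
      simp only [List.length_cons] at this
      simp only [Set.mem_setOf_eq]
      omega
    obtain ⟨x, hx1, hx2⟩ := cyc_of_not_nodup hl hnodup
    obtain ⟨p, hp1, hp2, hp3, _⟩ := exists_nodup_chain hx1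
    have hmem : x ∈ x₀ :: p := hp2 ▸ List.getLast_mem _
    have hsm : sccOf G x ∈ visitedSCCs G x₀ p := ⟨x, hmem, hx2, rfl⟩
    have hpos : 1 ≤ Nat.card (visitedSCCs G x₀ p) := by
      haveI : Nonempty ↥(visitedSCCs G x₀ p) := ⟨⟨_, hsm⟩⟩
      haveI : Finite ↥(visitedSCCs G x₀ p) := Subtype.finite
      exact Nat.card_pos
    exact le_trans hpos (le_mcc hp1 hp3)
  refine ⟨hd1, ?_⟩
  obtain ⟨Cu, hCu0, hCub⟩ := upper_bound h_scc (dcMeasure G x₀) x₀ le_rfl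
  obtain ⟨Cl, hCl0, hClb⟩ := lower_bound (G := G) x₀
  set d := maxSCCCount G x₀ with hd
  have hClR : (0 : ℝ) < (Cl : ℝ) := by exact_mod_cast hCl0
  refine ⟨((Cl : ℝ))⁻¹ ^ d, (Cu : ℝ) * 2 ^ d, by positivity, by positivity, ?_⟩
  intro n hn
  haveI : Finite ↥(dcPaths G x₀ n) := (dcPaths_finite x₀ n).to_subtype
  have hnR : (0 : ℝ) < (n : ℝ) := by exact_mod_cast hn
  constructor
  · rw [hball]
    by_cases hcase : Cl ≤ n
    · have h1 := hClb n hcase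
      have h3 : n < (n / Cl + 1) * Cl := by
        have ha := Nat.div_add_mod n Cl
        have hb := Nat.mod_lt n hCl0
        nlinarith
      have h2 : (n : ℝ) / Cl ≤ ((n / Cl : ℕ) : ℝ) + 1 := by
        rw [div_le_iff₀ hClR]
        have : (n : ℝ) < (((n / Cl : ℕ) : ℝ) + 1) * Cl := by exact_mod_cast h3
        linarith
      calc (Cl:ℝ)⁻¹ ^ d * (n:ℝ) ^ d = ((n:ℝ)/Cl) ^ d := by
            rw [div_pow, div_eq_mul_inv, inv_pow]
            ring
        _ ≤ (((n / Cl : ℕ) : ℝ) + 1) ^ d := by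
            refine pow_le_pow_left₀ (by positivity) h2 d
        _ = (((n / Cl + 1 : ℕ)) : ℝ) ^ d := by push_cast; ring
        _ ≤ ((Nat.card (dcPaths G x₀ n) : ℝ)) := by exact_mod_cast h1
    · push_neg at hcase
      have hcard1 : 1 ≤ Nat.card (dcPaths G x₀ n) := by
        haveI : Nonempty ↥(dcPaths G x₀ n) :=
          ⟨⟨[], List.Chain.nil, by simp⟩⟩
        exact Nat.card_pos
      have hstep : (Cl:ℝ)⁻¹ ^ d * (n:ℝ) ^ d ≤ 1 := by
        have h4 : (Cl:ℝ)⁻¹ ^ d * (n:ℝ) ^ d = ((n:ℝ)/Cl) ^ d := by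
          rw [div_pow, div_eq_mul_inv, inv_pow]
          ring
        rw [h4]
        refine pow_le_one₀ (by positivity) ?_
        rw [div_le_one hClR]
        exact_mod_cast hcase.le
      refine le_trans hstep ?_
      exact_mod_cast hcard1
  · rw [hball]
    have h1 := hCub n
    have h2 : ((n:ℝ) + 1) ^ d ≤ (2 * (n:ℝ)) ^ d := by
      refine pow_le_pow_left₀ (by positivity) ?_ d
      have : (1:ℝ) ≤ (n:ℝ) := by exact_mod_cast hn
      linarith
    calc ((Nat.card (dcPaths G x₀ n)):ℝ) ≤ (Cu : ℝ) * ((n:ℝ) + 1) ^ d := by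
          have := h1
          push_cast
          exact_mod_cast this
      _ ≤ (Cu : ℝ) * (2 * (n:ℝ)) ^ d := by
          exact mul_le_mul_of_nonneg_left h2 (by positivity)
      _ = (Cu : ℝ) * 2 ^ d * (n:ℝ) ^ d := by
          rw [mul_pow]
          ring


end TreeNotions
end
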